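/- arXiv:2001.02605 — 4 statements merged into one kernel-verified Lean document; each statement's English description precedes it below -/
import Mathlib

section
/- Let σ > -1 and Ψ_σ(t) = ∫_1^t (τ²-1)^σ dτ for t > 1. If σ ∈ (1/2, 3/2), then lim_{t→∞} (Ψ_σ(t) - t^{2σ+1}/(2σ+1)) / (-(σ/(2σ-1)) t^{2σ-1}) = 1. -/
open Real MeasureTheory Filter Set

private lemma rpow_mvt {a b : ℝ} (ha : 0 < a) (hab : a < b) (r : ℝ) :
    ∃ c ∈ Set.Ioo a b, b ^ r - a ^ r = r * c ^ (r - 1) * (b - a) := by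
  obtain ⟨c, hc, hc'⟩ := exists_hasDerivAt_eq_slope (fun x => x ^ r)
    (fun x => r * x ^ (r - 1)) hab
    (ContinuousOn.rpow_const continuousOn_id
      (fun x hx => Or.inl (ne_of_gt (lt_of_lt_of_le ha hx.1))))
    (fun x hx => Real.hasDerivAt_rpow_const (Or.inl (ne_of_gt (ha.trans hx.1))))
  refine ⟨c, hc, ?_⟩
  rw [hc']
  exact (div_mul_cancel₀ _ (sub_ne_zero.mpr hab.ne')).symm

private lemma rpow_diff_le {a b q : ℝ} (ha : 0 < a) (hab : a ≤ b) (hq : q ≤ 1) :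
    |b ^ q - a ^ q| ≤ |q| * a ^ (q - 1) * (b - a) := by
  rcases eq_or_lt_of_le hab with rfl | hlt
  · simp
  obtain ⟨c, hc, hceq⟩ := rpow_mvt ha hlt q
  have hcpos : 0 < c := ha.trans hc.1
  rw [hceq, abs_mul, abs_mul, abs_of_nonneg (Real.rpow_nonneg hcpos.le _),
    abs_of_nonneg (by linarith : (0:ℝ) ≤ b - a)]
  have h : c ^ (q - 1) ≤ a ^ (q - 1) :=
    Real.rpow_le_rpow_of_nonpos ha hc.1.le (by linarith)
  exact mul_le_mul_of_nonneg_right (mul_le_mul_of_nonneg_left h (abs_nonneg q)) (by linarith)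

private lemma key_bound {σ : ℝ} (h1 : 1/2 < σ) (h2 : σ < 3/2) {y : ℝ} (hy : 4 ≤ y) :
    |(y - 1) ^ σ - y ^ σ + σ * y ^ (σ - 1)| ≤
      σ * |σ - 1| * ((3/4 : ℝ) ^ (σ - 2) * y ^ (σ - 2)) := by
  have hσ0 : 0 < σ := by linarith
  have hy1 : (0:ℝ) < y - 1 := by linarith
  obtain ⟨c, hc, hceq⟩ := rpow_mvt hy1 (by linarith : y - 1 < y) σ
  have hcpos : 0 < c := hy1.trans hc.1
  have h3 : (y - 1) ^ σ - y ^ σ + σ * y ^ (σ - 1) = σ * (y ^ (σ - 1) - c ^ (σ - 1)) := by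
    have h4 : y - (y - 1) = 1 := by ring
    rw [h4, mul_one] at hceq
    linarith
  rw [h3, abs_mul, abs_of_nonneg hσ0.le]
  have hb := rpow_diff_le hcpos hc.2.le (q := σ - 1) (by linarith)
  have he : σ - 1 - 1 = σ - 2 := by ring
  rw [he] at hb
  have hstep1 : c ^ (σ - 2) ≤ (y - 1) ^ (σ - 2) :=
    Real.rpow_le_rpow_of_nonpos hy1 hc.1.le (by linarith)
  have hstep2 : (y - 1) ^ (σ - 2) ≤ (3/4 : ℝ) ^ (σ - 2) * y ^ (σ - 2) := by
    have := Real.rpow_le_rpow_of_nonpos (by linarith : (0:ℝ) < 3/4 * y)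
      (by linarith : 3/4 * y ≤ y - 1) (by linarith : σ - 2 ≤ 0)
    rwa [Real.mul_rpow (by norm_num) (by linarith)] at this
  calc σ * |y ^ (σ - 1) - c ^ (σ - 1)|
      ≤ σ * (|σ - 1| * c ^ (σ - 2) * (y - c)) := mul_le_mul_of_nonneg_left hb hσ0.le
    _ ≤ σ * (|σ - 1| * ((3/4 : ℝ) ^ (σ - 2) * y ^ (σ - 2)) * 1) := by
        refine mul_le_mul_of_nonneg_left ?_ hσ0.le
        refine mul_le_mul (mul_le_mul_of_nonneg_left (hstep1.trans hstep2) (abs_nonneg _))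
          (by linarith [hc.1]) (by linarith [hc.2]) (by positivity)
    _ = σ * |σ - 1| * ((3/4 : ℝ) ^ (σ - 2) * y ^ (σ - 2)) := by ring

/-- Second-order asymptotic expansion of `Ψ_σ(t) = ∫_1^t (τ²-1)^σ dτ` for
`σ ∈ (1/2, 3/2)`:
`Ψ_σ(t) = t^{2σ+1}/(2σ+1) - (σ/(2σ-1)) t^{2σ-1} + o(t^{2σ-1})` as `t → ∞`. -/
theorem Psi_second_order_asymptotics (σ : ℝ) (hσ : σ ∈ Set.Ioo (1/2 : ℝ) (3/2)) :
    Filter.Tendsto (fun t : ℝ =>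
        ((∫ τ in (1:ℝ)..t, (τ ^ 2 - 1) ^ σ) - t ^ (2 * σ + 1) / (2 * σ + 1)) /
          (-(σ / (2 * σ - 1)) * t ^ (2 * σ - 1)))
      Filter.atTop (nhds 1) := by
  obtain ⟨h1, h2⟩ := hσ
  have hσ0 : 0 < σ := by linarith
  have hp : 0 < 2 * σ - 1 := by linarith
  have hq : 0 < 2 * σ + 1 := by linarith
  set ff : ℝ → ℝ := fun τ => (τ ^ 2 - 1) ^ σ with hff
  set dd : ℝ → ℝ := fun τ => τ ^ (2 * σ) - σ * τ ^ (2 * σ - 2) with hdd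
  set hh : ℝ → ℝ := fun τ => ff τ - dd τ with hhh
  set G : ℝ → ℝ := fun t => t ^ (2 * σ + 1) / (2 * σ + 1) - σ / (2 * σ - 1) * t ^ (2 * σ - 1)
    with hG
  -- continuity of ff
  have cont_ff : Continuous ff := by
    rw [continuous_iff_continuousAt]
    intro x
    exact (Real.continuousAt_rpow_const _ σ (Or.inr hσ0.le)).comp (by fun_prop)
  -- continuity of dd away from 0
  have cont_dd : ContinuousOn dd (Set.Ici (2:ℝ)) := by
    apply ContinuousOn.sub
    · exact ContinuousOn.rpow_const continuousOn_id
        (fun x hx => Or.inl (ne_of_gt (lt_of_lt_of_le two_pos hx)))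
    · exact continuousOn_const.mul (ContinuousOn.rpow_const continuousOn_id
        (fun x hx => Or.inl (ne_of_gt (lt_of_lt_of_le two_pos hx))))
  -- derivative of G
  have hGd : ∀ x : ℝ, 0 < x → HasDerivAt G (dd x) x := by
    intro x hx
    have ha : HasDerivAt (fun t : ℝ => t ^ (2 * σ + 1)) ((2 * σ + 1) * x ^ (2 * σ)) x := by
      have := Real.hasDerivAt_rpow_const (x := x) (p := 2 * σ + 1) (Or.inl hx.ne')
      have he : 2 * σ + 1 - 1 = 2 * σ := by ring
      rwa [he] at this
    have hb : HasDerivAt (fun t : ℝ => t ^ (2 * σ - 1)) ((2 * σ - 1) * x ^ (2 * σ - 2)) x := by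
      have := Real.hasDerivAt_rpow_const (x := x) (p := 2 * σ - 1) (Or.inl hx.ne')
      have he : 2 * σ - 1 - 1 = 2 * σ - 2 := by ring
      rwa [he] at this
    have := (ha.div_const (2 * σ + 1)).sub (hb.const_mul (σ / (2 * σ - 1)))
    refine this.congr_deriv ?_
    simp only [hdd]
    field_simp
  -- pointwise bound on hh
  set C : ℝ := σ * |σ - 1| * (3/4 : ℝ) ^ (σ - 2) with hC
  have hbound : ∀ τ : ℝ, 2 ≤ τ → ‖hh τ‖ ≤ C * τ ^ (2 * σ - 4) := by
    intro τ hτ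
    have hτ0 : (0:ℝ) ≤ τ := by linarith
    have e1 : τ ^ (2 * σ) = (τ ^ 2) ^ σ := by
      rw [← Real.rpow_natCast τ 2, ← Real.rpow_mul hτ0]
      norm_num
    have e2 : τ ^ (2 * σ - 2) = (τ ^ 2) ^ (σ - 1) := by
      rw [← Real.rpow_natCast τ 2, ← Real.rpow_mul hτ0]
      congr 1
      push_cast
      ring
    have e3 : τ ^ (2 * σ - 4) = (τ ^ 2) ^ (σ - 2) := by
      rw [← Real.rpow_natCast τ 2, ← Real.rpow_mul hτ0]
      congr 1
      push_cast
      ring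
    have hy : (4:ℝ) ≤ τ ^ 2 := by nlinarith
    have := key_bound h1 h2 hy
    simp only [hhh, hff, hdd, Real.norm_eq_abs]
    rw [e1, e2, e3]
    calc |(τ ^ 2 - 1) ^ σ - ((τ ^ 2) ^ σ - σ * (τ ^ 2) ^ (σ - 1))|
        = |(τ ^ 2 - 1) ^ σ - (τ ^ 2) ^ σ + σ * (τ ^ 2) ^ (σ - 1)| := by ring_nf
      _ ≤ σ * |σ - 1| * ((3/4 : ℝ) ^ (σ - 2) * (τ ^ 2) ^ (σ - 2)) := this
      _ = C * (τ ^ 2) ^ (σ - 2) := by rw [hC]; ring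
  -- integrability of hh on Ioi 2
  have hint : IntegrableOn hh (Set.Ioi (2:ℝ)) := by
    have hmeas : AEStronglyMeasurable hh (volume.restrict (Set.Ioi (2:ℝ))) :=
      ((cont_ff.continuousOn.sub (cont_dd.mono Set.Ioi_subset_Ici_self)) :
        ContinuousOn hh (Set.Ioi (2:ℝ))).aestronglyMeasurable measurableSet_Ioi
    have hbig : IntegrableOn (fun τ : ℝ => C * τ ^ (2 * σ - 4)) (Set.Ioi (2:ℝ)) :=
      (integrableOn_Ioi_rpow_of_lt (by linarith) (by norm_num)).const_mul C
    exact hbig.mono' hmeas ((ae_restrict_iff' measurableSet_Ioi).mpr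
      (ae_of_all _ (fun τ hτ => hbound τ (le_of_lt hτ))))
  -- limit of the tail integral
  have hIlim : Tendsto (fun t : ℝ => ∫ τ in (2:ℝ)..t, hh τ) atTop
      (nhds (∫ τ in Set.Ioi (2:ℝ), hh τ)) :=
    intervalIntegral_tendsto_integral_Ioi 2 hint tendsto_id
  set A : ℝ := (∫ τ in (1:ℝ)..(2:ℝ), ff τ) - G 2 with hA
  set K : ℝ := ∫ τ in Set.Ioi (2:ℝ), hh τ with hK
  -- the auxiliary tendsto
  have hmain : Tendsto (fun t : ℝ =>
      1 + ((A + ∫ τ in (2:ℝ)..t, hh τ) / t ^ (2 * σ - 1)) * (-(σ / (2 * σ - 1)))⁻¹)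
      atTop (nhds 1) := by
    have hdiv : Tendsto (fun t : ℝ => (A + ∫ τ in (2:ℝ)..t, hh τ) / t ^ (2 * σ - 1))
        atTop (nhds 0) :=
      Tendsto.div_atTop (tendsto_const_nhds.add hIlim) (tendsto_rpow_atTop hp)
    have h1' : Tendsto (fun _ : ℝ => (1:ℝ)) atTop (nhds 1) := tendsto_const_nhds
    have := h1'.add (hdiv.mul_const (-(σ / (2 * σ - 1)))⁻¹)
    simpa using this
  apply hmain.congr'
  filter_upwards [eventually_ge_atTop (2:ℝ)] with t ht
  have ht0 : (0:ℝ) < t := by linarith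
  -- interval integrabilities
  have hi12 : IntervalIntegrable ff volume 1 2 := cont_ff.intervalIntegrable _ _
  have hi2t : IntervalIntegrable ff volume 2 t := cont_ff.intervalIntegrable _ _
  have hidd : IntervalIntegrable dd volume 2 t := by
    apply ContinuousOn.intervalIntegrable
    apply cont_dd.mono
    rw [Set.uIcc_of_le ht]
    exact fun x hx => hx.1
  have hsplit : ∫ τ in (1:ℝ)..t, ff τ = (∫ τ in (1:ℝ)..2, ff τ) + ∫ τ in (2:ℝ)..t, ff τ :=
    (intervalIntegral.integral_add_adjacent_intervals hi12 hi2t).symm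
  have hftc : ∫ τ in (2:ℝ)..t, dd τ = G t - G 2 := by
    apply intervalIntegral.integral_eq_sub_of_hasDerivAt
    · intro x hx
      rw [Set.uIcc_of_le ht] at hx
      exact hGd x (by linarith [hx.1])
    · exact hidd
  have hIeq : ∫ τ in (2:ℝ)..t, hh τ = (∫ τ in (2:ℝ)..t, ff τ) - ∫ τ in (2:ℝ)..t, dd τ :=
    intervalIntegral.integral_sub hi2t hidd
  have htp : (0:ℝ) < t ^ (2 * σ - 1) := Real.rpow_pos_of_pos ht0 _
  have hcne : σ / (2 * σ - 1) ≠ 0 := ne_of_gt (div_pos hσ0 hp)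
  have hnum : (∫ τ in (1:ℝ)..t, ff τ) - t ^ (2 * σ + 1) / (2 * σ + 1) =
      A + (∫ τ in (2:ℝ)..t, hh τ) - σ / (2 * σ - 1) * t ^ (2 * σ - 1) := by
    rw [hsplit, hIeq, hftc, hA, hG]
    ring
  show _ = ((∫ τ in (1:ℝ)..t, ff τ) - t ^ (2 * σ + 1) / (2 * σ + 1)) /
      (-(σ / (2 * σ - 1)) * t ^ (2 * σ - 1))
  rw [hnum]
  field_simp
  ring
end

section
/- Let σ > -1/2 and Υ_σ(t) = ∫_1^t (τ²-1)^σ log(τ²-1) dτ for t > 1. Then Υ_σ(t) = (2/(2σ+1)) t^{2σ+1} log t - (2/(2σ+1)²) t^{2σ+1} + o(t^{2σ+1}) as t → ∞. In particular lim_{t→∞} Υ_σ(t) / ((2/(2σ+1)) t^{2σ+1} log t) = 1. -/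
open Real MeasureTheory Filter

lemma abs_log_le_aux {x : ℝ} (hx0 : 0 < x) (hx3 : x ≤ 3) :
    |Real.log x| ≤ 8 * x ^ (-(8:ℝ)⁻¹) := by
  rcases le_or_gt x 1 with h1 | h1
  · have h : |Real.log x| = Real.log x⁻¹ := by
      rw [Real.log_inv, abs_of_nonpos (Real.log_nonpos hx0.le h1)]
    rw [h]
    calc Real.log x⁻¹ ≤ (x⁻¹) ^ ((8:ℝ)⁻¹) / (8:ℝ)⁻¹ :=
          Real.log_le_rpow_div (by positivity) (by norm_num)
      _ = 8 * x ^ (-(8:ℝ)⁻¹) := by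
          rw [Real.inv_rpow hx0.le, ← Real.rpow_neg hx0.le]
          ring
  · rw [abs_of_nonneg (Real.log_nonneg h1.le)]
    have h2 : Real.log x ≤ x - 1 := Real.log_le_sub_one_of_pos hx0
    have h4 : x ^ ((8:ℝ)⁻¹) ≤ 3 := by
      calc x ^ ((8:ℝ)⁻¹) ≤ x ^ (1:ℝ) :=
            Real.rpow_le_rpow_of_exponent_le h1.le (by norm_num)
        _ = x := Real.rpow_one x
        _ ≤ 3 := hx3
    have h5 : (3:ℝ)⁻¹ ≤ x ^ (-(8:ℝ)⁻¹) := by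
      rw [Real.rpow_neg hx0.le]
      exact inv_anti₀ (by positivity) h4
    nlinarith

lemma integrable_f (σ : ℝ) (hσ : -1/2 < σ) {t : ℝ} (ht : 1 ≤ t) :
    IntervalIntegrable (fun τ : ℝ => (τ^2 - 1) ^ σ * Real.log (τ^2 - 1)) volume 1 t := by
  set σ' : ℝ := σ - 8⁻¹ with hσ'
  have hσ'1 : (-1:ℝ) < σ' := by rw [hσ']; norm_num; linarith
  have hm : Measurable (fun τ : ℝ => (τ^2 - 1) ^ σ * Real.log (τ^2 - 1)) := by
    measurability
  have h12 : IntervalIntegrable (fun τ : ℝ => (τ^2 - 1) ^ σ * Real.log (τ^2 - 1)) volume 1 2 := by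
    have hB : IntervalIntegrable (fun τ : ℝ => (8 * 3 ^ |σ'|) * (τ - 1) ^ σ') volume 1 2 := by
      have := (intervalIntegral.intervalIntegrable_rpow' (a := 0) (b := 1) hσ'1).comp_sub_right 1
      norm_num at this
      exact this.const_mul _
    refine hB.mono_fun hm.aestronglyMeasurable.restrict ?_
    rw [Set.uIoc_of_le (by norm_num : (1:ℝ) ≤ 2)]
    refine (ae_restrict_iff' measurableSet_Ioc).mpr (ae_of_all _ fun τ hτ => ?_)
    obtain ⟨h1, h2⟩ := hτ
    have hu : 0 < τ^2 - 1 := by nlinarith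
    have hu3 : τ^2 - 1 ≤ 3 := by nlinarith
    have hup : 0 < τ - 1 := by linarith
    have key : |(τ^2 - 1) ^ σ * Real.log (τ^2 - 1)| ≤ 8 * (τ^2-1) ^ σ' := by
      rw [abs_mul, abs_of_nonneg (Real.rpow_nonneg hu.le σ)]
      calc (τ^2-1) ^ σ * |Real.log (τ^2-1)| ≤ (τ^2-1) ^ σ * (8 * (τ^2-1) ^ (-(8:ℝ)⁻¹)) := by
            exact mul_le_mul_of_nonneg_left (abs_log_le_aux hu hu3) (Real.rpow_nonneg hu.le σ)
        _ = 8 * (τ^2-1) ^ σ' := by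
            rw [hσ', show σ - 8⁻¹ = σ + -(8:ℝ)⁻¹ by ring, Real.rpow_add hu]; ring
    have split : (τ^2-1 : ℝ) ^ σ' = (τ-1) ^ σ' * (τ+1) ^ σ' := by
      rw [← Real.mul_rpow hup.le (by linarith : (0:ℝ) ≤ τ + 1)]
      ring_nf
    have hfac : (τ+1 : ℝ) ^ σ' ≤ 3 ^ |σ'| := by
      rcases le_or_gt 0 σ' with h | h
      · rw [abs_of_nonneg h]
        exact Real.rpow_le_rpow (by linarith) (by linarith) h
      · calc (τ+1:ℝ) ^ σ' ≤ 1 := Real.rpow_le_one_of_one_le_of_nonpos (by linarith) h.le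
          _ ≤ 3 ^ |σ'| := Real.one_le_rpow (by norm_num) (abs_nonneg _)
    have hBnn : (0:ℝ) ≤ (8 * 3 ^ |σ'|) * (τ - 1) ^ σ' := by positivity
    simp only [Real.norm_eq_abs]
    rw [abs_of_nonneg hBnn]
    calc |(τ^2 - 1) ^ σ * Real.log (τ^2 - 1)| ≤ 8 * (τ^2-1) ^ σ' := key
      _ = 8 * ((τ-1) ^ σ' * (τ+1) ^ σ') := by rw [split]
      _ ≤ (8 * 3 ^ |σ'|) * (τ - 1) ^ σ' := by
          have := mul_le_mul_of_nonneg_left hfac (Real.rpow_nonneg hup.le σ')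
          nlinarith [Real.rpow_nonneg hup.le σ']
  rcases le_or_gt t 2 with h | h
  · exact h12.mono_set (Set.uIcc_subset_uIcc_left (Set.mem_uIcc.mpr (Or.inl ⟨ht, h⟩)))
  · refine h12.trans ?_
    apply ContinuousOn.intervalIntegrable
    have hsub : Set.uIcc (2:ℝ) t ⊆ Set.Ici (2:ℝ) := by
      rw [Set.uIcc_of_le h.le]; exact Set.Icc_subset_Ici_self
    have hne : ∀ τ ∈ Set.uIcc (2:ℝ) t, τ^2 - 1 ≠ 0 := fun τ hτ => by
      have := hsub hτ; simp only [Set.mem_Ici] at this; nlinarith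
    exact ((((continuousOn_id.pow 2).sub continuousOn_const).rpow_const
        (fun τ hτ => Or.inl (hne τ hτ))).mul
      (((continuousOn_id.pow 2).sub continuousOn_const).log hne))

lemma G_deriv (σ : ℝ) (hσ : -1/2 < σ) {x : ℝ} (hx : 1 ≤ x) :
    HasDerivAt (fun x : ℝ => (2/(2*σ+1)) * x^(2*σ+1) * Real.log x
      - (2/(2*σ+1)^2) * x^(2*σ+1)) (2 * x^(2*σ) * Real.log x) x := by
  have hx0 : (0:ℝ) < x := by linarith
  have hp : (2*σ+1) ≠ 0 := by linarith
  have h1 : HasDerivAt (fun x : ℝ => x^(2*σ+1)) ((2*σ+1) * x^(2*σ+1-1)) x :=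
    Real.hasDerivAt_rpow_const (Or.inl hx0.ne')
  have h2 : HasDerivAt Real.log x⁻¹ x := Real.hasDerivAt_log hx0.ne'
  have h3 := ((h1.mul h2).const_mul (2/(2*σ+1))).sub (h1.const_mul (2/(2*σ+1)^2))
  convert h3 using 1
  · rfl
  · rfl
  · funext x; simp only [Pi.sub_apply, Pi.mul_apply]; ring
  have e1 : x^(2*σ+1-1) = x^(2*σ) := by norm_num
  have e2 : x^(2*σ+1) * x⁻¹ = x^(2*σ) := by
    rw [show (2*σ:ℝ) = 2*σ+1-1 by ring, Real.rpow_sub hx0, Real.rpow_one]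
    ring
  rw [e1, e2]
  field_simp
  ring

lemma integral_g (σ : ℝ) (hσ : -1/2 < σ) {t : ℝ} (ht : 1 ≤ t) :
    ∫ τ in (1:ℝ)..t, 2 * τ^(2*σ) * Real.log τ
      = (2/(2*σ+1)) * t^(2*σ+1) * Real.log t - (2/(2*σ+1)^2) * t^(2*σ+1) + 2/(2*σ+1)^2 := by
  have key := intervalIntegral.integral_eq_sub_of_hasDerivAt
    (f := fun x : ℝ => (2/(2*σ+1)) * x^(2*σ+1) * Real.log x - (2/(2*σ+1)^2) * x^(2*σ+1))
    (f' := fun x : ℝ => 2 * x^(2*σ) * Real.log x) (a := 1) (b := t)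
    (fun x hx => by
      rw [Set.uIcc_of_le ht] at hx
      exact G_deriv σ hσ hx.1)
    (by
      apply ContinuousOn.intervalIntegrable
      rw [Set.uIcc_of_le ht]
      have hpos : ∀ x ∈ Set.Icc (1:ℝ) t, x ≠ 0 := fun x hx => by
        have := hx.1; positivity
      have c1 : ContinuousOn (fun x : ℝ => x ^ (2*σ)) (Set.Icc 1 t) :=
        ContinuousOn.rpow_const continuousOn_id (fun x hx => Or.inl (hpos x hx))
      have c2 : ContinuousOn (fun x : ℝ => Real.log x) (Set.Icc 1 t) :=
        ContinuousOn.log continuousOn_id hpos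
      exact (((continuousOn_const : ContinuousOn (fun _ : ℝ => (2:ℝ)) (Set.Icc 1 t)).mul (c1.mul c2))).congr (fun x hx => by simp only [Pi.mul_apply]; ring))
  rw [key]
  simp [Real.one_rpow, Real.log_one]

set_option maxHeartbeats 1000000 in
lemma h_tendsto (σ : ℝ) :
    Filter.Tendsto (fun τ : ℝ =>
      ((τ^2 - 1) ^ σ * Real.log (τ^2 - 1) - 2 * τ^(2*σ) * Real.log τ) / τ^(2*σ))
      atTop (nhds 0) := by
  -- limit of second piece
  have hu0 : Filter.Tendsto (fun τ : ℝ => (τ^2)⁻¹) atTop (nhds 0) :=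
    (tendsto_pow_atTop two_ne_zero).inv_tendsto_atTop
  have hbase : Filter.Tendsto (fun τ : ℝ => 1 - (τ^2)⁻¹) atTop (nhds 1) := by
    have := (tendsto_const_nhds (x := (1:ℝ)) (f := atTop)).sub hu0
    simpa using this
  have L2 : Filter.Tendsto (fun τ : ℝ => (1 - (τ^2)⁻¹)^σ * Real.log (1 - (τ^2)⁻¹))
      atTop (nhds 0) := by
    have cont : ContinuousAt (fun y : ℝ => y ^ σ * Real.log y) 1 :=
      (Real.continuousAt_rpow_const 1 σ (Or.inl one_ne_zero)).mul
        (Real.continuousAt_log one_ne_zero)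
    have := cont.tendsto.comp hbase
    simpa [Function.comp_def] using this
  -- slope limit
  have hφ : HasDerivAt (fun u : ℝ => (1 - u) ^ σ) (-σ) 0 := by
    have h1 : HasDerivAt (fun x : ℝ => x ^ σ) (σ * (1:ℝ)^(σ-1)) 1 :=
      Real.hasDerivAt_rpow_const (Or.inl one_ne_zero)
    have h2 : HasDerivAt (fun u : ℝ => 1 - u) (-1) 0 := by
      simpa using (hasDerivAt_id (0:ℝ)).const_sub 1
    have h1' : HasDerivAt (fun x : ℝ => x ^ σ) (σ * (1:ℝ)^(σ-1)) ((1:ℝ) - 0) := by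
      rw [sub_zero]; exact h1
    have h3 := HasDerivAt.comp (x := (0:ℝ)) h1' h2
    simpa [Real.one_rpow, Function.comp_def] using h3
  have hslope : Filter.Tendsto (fun u : ℝ => ((1 - u)^σ - 1) / u) (nhdsWithin 0 {0}ᶜ)
      (nhds (-σ)) := by
    have := hasDerivAt_iff_tendsto_slope.mp hφ
    refine this.congr' ?_
    filter_upwards [self_mem_nhdsWithin] with u hu
    simp only [Set.mem_compl_iff, Set.mem_singleton_iff] at hu
    rw [slope_def_field]
    field_simp
    simp only [sub_zero, Real.one_rpow]
  have hu_ne : Filter.Tendsto (fun τ : ℝ => (τ^2)⁻¹) atTop (nhdsWithin 0 {0}ᶜ) := by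
    rw [tendsto_nhdsWithin_iff]
    refine ⟨hu0, ?_⟩
    filter_upwards [eventually_ge_atTop (1:ℝ)] with τ hτ
    simp only [Set.mem_compl_iff, Set.mem_singleton_iff]
    positivity
  have A : Filter.Tendsto (fun τ : ℝ => ((1 - (τ^2)⁻¹)^σ - 1) / (τ^2)⁻¹) atTop (nhds (-σ)) :=
    hslope.comp hu_ne
  have B : Filter.Tendsto (fun τ : ℝ => (τ^2)⁻¹ * (2 * Real.log τ)) atTop (nhds 0) := by
    have hlo : Filter.Tendsto (fun x : ℝ => Real.log x / x ^ (2:ℝ)) atTop (nhds 0) :=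
      (isLittleO_log_rpow_atTop (by norm_num : (0:ℝ) < 2)).tendsto_div_nhds_zero
    have := hlo.const_mul 2
    rw [mul_zero] at this
    refine this.congr' ?_
    filter_upwards [eventually_gt_atTop (0:ℝ)] with τ hτ
    rw [show (2:ℝ) = ((2:ℕ):ℝ) by norm_num, Real.rpow_natCast]
    field_simp
  have L1 : Filter.Tendsto (fun τ : ℝ => ((1 - (τ^2)⁻¹)^σ - 1) * (2 * Real.log τ))
      atTop (nhds 0) := by
    have := A.mul B
    rw [neg_mul, mul_zero, neg_zero] at this
    refine this.congr' ?_
    filter_upwards [eventually_ge_atTop (1:ℝ)] with τ hτ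
    have hne : ((τ:ℝ)^2)⁻¹ ≠ 0 := by positivity
    rw [div_mul_eq_mul_div, mul_comm ((τ^2:ℝ))⁻¹ (2 * Real.log τ), ← mul_assoc,
      mul_div_assoc, div_self hne, mul_one]
  have key := L1.add L2
  rw [add_zero] at key
  refine key.congr' ?_
  filter_upwards [eventually_gt_atTop (1:ℝ)] with τ hτ
  have hτ0 : (0:ℝ) < τ := by linarith
  have hu1 : (0:ℝ) < 1 - (τ^2)⁻¹ := by
    have : (1:ℝ) < τ^2 := by nlinarith [sq_nonneg (τ-1)]
    have h2 : (τ^2)⁻¹ < 1 := by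
      rw [inv_lt_one_iff₀]; right; exact this
    linarith
  have hfac : (τ:ℝ)^2 - 1 = τ^2 * (1 - (τ^2)⁻¹) := by
    field_simp
  have hpow : ((τ:ℝ)^2)^σ = τ^(2*σ) := by
    rw [← Real.rpow_natCast τ 2, ← Real.rpow_mul hτ0.le]
    norm_num
  have hrpow_pos : (0:ℝ) < τ^(2*σ) := Real.rpow_pos_of_pos hτ0 _
  have hsplit : ((τ:ℝ)^2 - 1)^σ = τ^(2*σ) * (1 - (τ^2)⁻¹)^σ := by
    rw [hfac, Real.mul_rpow (by positivity) hu1.le, hpow]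
  have hlog : Real.log ((τ:ℝ)^2 - 1) = 2 * Real.log τ + Real.log (1 - (τ^2)⁻¹) := by
    rw [hfac, Real.log_mul (by positivity) hu1.ne', Real.log_pow]
    norm_num
  rw [hsplit, hlog]
  generalize τ^(2*σ) = A at hrpow_pos ⊢
  set A' := A with hA
  set c := (1 - (τ^2)⁻¹)^σ with hc
  set l := Real.log τ with hl
  set m := Real.log (1 - (τ^2)⁻¹) with hm
  have hAne : A ≠ 0 := hrpow_pos.ne'
  field_simp
  ring

lemma integrable_g (σ : ℝ) {t : ℝ} (ht : 1 ≤ t) :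
    IntervalIntegrable (fun τ : ℝ => 2 * τ^(2*σ) * Real.log τ) volume 1 t := by
  apply ContinuousOn.intervalIntegrable
  rw [Set.uIcc_of_le ht]
  have hpos : ∀ x ∈ Set.Icc (1:ℝ) t, x ≠ 0 := fun x hx => by
    have := hx.1; positivity
  have c1 : ContinuousOn (fun x : ℝ => x ^ (2*σ)) (Set.Icc 1 t) :=
    ContinuousOn.rpow_const continuousOn_id (fun x hx => Or.inl (hpos x hx))
  have c2 : ContinuousOn (fun x : ℝ => Real.log x) (Set.Icc 1 t) :=
    ContinuousOn.log continuousOn_id hpos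
  exact (((continuousOn_const : ContinuousOn (fun _ : ℝ => (2:ℝ)) (Set.Icc 1 t)).mul
    (c1.mul c2))).congr (fun x hx => by simp only [Pi.mul_apply]; ring)

lemma int_h_tendsto (σ : ℝ) (hσ : -1/2 < σ) :
    Filter.Tendsto (fun t : ℝ =>
      (∫ τ in (1:ℝ)..t, ((τ^2 - 1) ^ σ * Real.log (τ^2 - 1) - 2 * τ^(2*σ) * Real.log τ))
        / t^(2*σ+1)) atTop (nhds 0) := by
  have hp : (0:ℝ) < 2*σ+1 := by linarith
  have int_h : ∀ t : ℝ, 1 ≤ t → IntervalIntegrable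
      (fun τ : ℝ => (τ^2 - 1) ^ σ * Real.log (τ^2 - 1) - 2 * τ^(2*σ) * Real.log τ)
      volume 1 t := fun t ht => (integrable_f σ hσ ht).sub (integrable_g σ ht)
  rw [Metric.tendsto_atTop]
  intro ε hε
  have hε' : (0:ℝ) < ε * (2*σ+1) / 4 := by positivity
  obtain ⟨T0, hT0⟩ := Metric.tendsto_atTop.mp (h_tendsto σ) (ε * (2*σ+1) / 4) hε'
  set T : ℝ := max T0 2 with hT
  have hT2 : (2:ℝ) ≤ T := le_max_right _ _
  have hT1 : (1:ℝ) ≤ T := by linarith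
  set C : ℝ := |∫ τ in (1:ℝ)..T, ((τ^2 - 1) ^ σ * Real.log (τ^2 - 1) - 2 * τ^(2*σ) * Real.log τ)|
    with hC
  obtain ⟨T1, hT1'⟩ := (tendsto_rpow_atTop hp).eventually_ge_atTop (2*C/ε + 1) |>.exists_forall_of_atTop
  refine ⟨max T T1, fun t ht => ?_⟩
  have htT : T ≤ t := le_trans (le_max_left _ _) ht
  have ht1 : (1:ℝ) ≤ t := le_trans hT1 htT
  have htp : 2*C/ε + 1 ≤ t^(2*σ+1) := hT1' t (le_trans (le_max_right _ _) ht)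
  have htppos : (0:ℝ) < t^(2*σ+1) := by
    have : (0:ℝ) < 2*C/ε + 1 := by positivity
    linarith
  -- split the integral
  have hTt : IntervalIntegrable
      (fun τ : ℝ => (τ^2 - 1) ^ σ * Real.log (τ^2 - 1) - 2 * τ^(2*σ) * Real.log τ)
      volume T t := (int_h T hT1).symm.trans (int_h t ht1)
  have hsplit : (∫ τ in (1:ℝ)..t, ((τ^2 - 1) ^ σ * Real.log (τ^2 - 1) - 2 * τ^(2*σ) * Real.log τ))
      = (∫ τ in (1:ℝ)..T, ((τ^2 - 1) ^ σ * Real.log (τ^2 - 1) - 2 * τ^(2*σ) * Real.log τ))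
      + ∫ τ in T..t, ((τ^2 - 1) ^ σ * Real.log (τ^2 - 1) - 2 * τ^(2*σ) * Real.log τ) :=
    (intervalIntegral.integral_add_adjacent_intervals (int_h T hT1) hTt).symm
  -- bound the tail
  have hbound_int : IntervalIntegrable (fun τ : ℝ => (ε * (2*σ+1) / 4) * τ^(2*σ)) volume T t :=
    (intervalIntegral.intervalIntegrable_rpow' (by linarith : (-1:ℝ) < 2*σ)).const_mul _
  have htail : ‖∫ τ in T..t, ((τ^2 - 1) ^ σ * Real.log (τ^2 - 1) - 2 * τ^(2*σ) * Real.log τ)‖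
      ≤ |∫ τ in T..t, (ε * (2*σ+1) / 4) * τ^(2*σ)| := by
    refine intervalIntegral.norm_integral_le_abs_of_norm_le ?_ hbound_int
    rw [Set.uIoc_of_le htT]
    refine (ae_restrict_iff' measurableSet_Ioc).mpr (ae_of_all _ fun τ hτ => ?_)
    have hτT : T < τ := hτ.1
    have hτ0 : (0:ℝ) < τ := by linarith
    have hrp : (0:ℝ) < τ^(2*σ) := Real.rpow_pos_of_pos hτ0 _
    have := hT0 τ (by linarith [le_max_left T0 2] : T0 ≤ τ)
    rw [Real.dist_eq, sub_zero, abs_div, abs_of_pos hrp] at this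
    rw [Real.norm_eq_abs]
    calc |(τ^2 - 1) ^ σ * Real.log (τ^2 - 1) - 2 * τ^(2*σ) * Real.log τ|
        ≤ (ε * (2*σ+1) / 4) * τ^(2*σ) := by
          rw [div_lt_iff₀ hrp] at this
          linarith
      _ = (ε * (2*σ+1) / 4) * τ^(2*σ) := rfl
  have hint_val : (∫ τ in T..t, (ε * (2*σ+1) / 4) * τ^(2*σ))
      = (ε * (2*σ+1) / 4) * ((t^(2*σ+1) - T^(2*σ+1)) / (2*σ+1)) := by
    rw [intervalIntegral.integral_const_mul, integral_rpow (Or.inl (by linarith : (-1:ℝ) < 2*σ))]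
  have hTppos : (0:ℝ) < T^(2*σ+1) := Real.rpow_pos_of_pos (by linarith) _
  have htail2 : |∫ τ in T..t, (ε * (2*σ+1) / 4) * τ^(2*σ)| ≤ ε / 4 * t^(2*σ+1) := by
    rw [hint_val, abs_of_nonneg]
    · rw [mul_div_assoc'] at *
      have hmono : T^(2*σ+1) ≤ t^(2*σ+1) :=
        Real.rpow_le_rpow (by linarith) htT hp.le
      rw [div_le_iff₀ hp] at *
      nlinarith
    · have hmono : T^(2*σ+1) ≤ t^(2*σ+1) :=
        Real.rpow_le_rpow (by linarith) htT hp.le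
      have : (0:ℝ) ≤ (t^(2*σ+1) - T^(2*σ+1)) / (2*σ+1) := by
        apply div_nonneg (by linarith) hp.le
      positivity
  have hCbound : C < ε / 2 * t^(2*σ+1) := by
    have h1 : 2*C/ε < t^(2*σ+1) := by linarith
    rw [div_lt_iff₀ hε] at h1
    linarith
  rw [Real.dist_eq, sub_zero, abs_div, abs_of_pos htppos, div_lt_iff₀ htppos, hsplit]
  calc |(∫ τ in (1:ℝ)..T, ((τ^2 - 1) ^ σ * Real.log (τ^2 - 1) - 2 * τ^(2*σ) * Real.log τ))
      + ∫ τ in T..t, ((τ^2 - 1) ^ σ * Real.log (τ^2 - 1) - 2 * τ^(2*σ) * Real.log τ)|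
      ≤ C + ε / 4 * t^(2*σ+1) := by
        refine le_trans (abs_add_le _ _) ?_
        have := le_trans htail htail2
        rw [Real.norm_eq_abs] at this
        linarith
    _ < ε * t^(2*σ+1) := by nlinarith

/-- Asymptotics of `Υ_σ(t) = ∫_1^t (τ²-1)^σ log(τ²-1) dτ` for `σ > -1/2`:
`Υ_σ(t) = (2/(2σ+1)) t^{2σ+1} log t - (2/(2σ+1)²) t^{2σ+1} + o(t^{2σ+1})`
as `t → ∞`; in particular `Υ_σ(t) / ((2/(2σ+1)) t^{2σ+1} log t) → 1`. -/
theorem Upsilon_asymptotics (σ : ℝ) (hσ : -1/2 < σ) :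
    Filter.Tendsto (fun t : ℝ =>
        ((∫ τ in (1:ℝ)..t, (τ ^ 2 - 1) ^ σ * Real.log (τ ^ 2 - 1))
          - (2 / (2 * σ + 1)) * t ^ (2 * σ + 1) * Real.log t
          + (2 / (2 * σ + 1) ^ 2) * t ^ (2 * σ + 1)) / t ^ (2 * σ + 1))
      Filter.atTop (nhds 0) ∧
    Filter.Tendsto (fun t : ℝ =>
        (∫ τ in (1:ℝ)..t, (τ ^ 2 - 1) ^ σ * Real.log (τ ^ 2 - 1)) /
          ((2 / (2 * σ + 1)) * t ^ (2 * σ + 1) * Real.log t))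
      Filter.atTop (nhds 1) := by
  have hp : (0:ℝ) < 2*σ+1 := by linarith
  have hsplit : ∀ t : ℝ, 1 ≤ t →
      (∫ τ in (1:ℝ)..t, (τ ^ 2 - 1) ^ σ * Real.log (τ ^ 2 - 1))
        - (2 / (2 * σ + 1)) * t ^ (2 * σ + 1) * Real.log t
        + (2 / (2 * σ + 1) ^ 2) * t ^ (2 * σ + 1)
      = (∫ τ in (1:ℝ)..t, ((τ^2 - 1) ^ σ * Real.log (τ^2 - 1) - 2 * τ^(2*σ) * Real.log τ))
        + 2/(2*σ+1)^2 := by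
    intro t ht
    rw [intervalIntegral.integral_sub (integrable_f σ hσ ht) (integrable_g σ ht),
      integral_g σ hσ ht]
    ring
  have hconst : Filter.Tendsto (fun t : ℝ => (2/(2*σ+1)^2) / t^(2*σ+1)) atTop (nhds 0) := by
    have := (tendsto_rpow_atTop hp).inv_tendsto_atTop
    have h2 := this.const_mul (2/(2*σ+1)^2)
    rw [mul_zero] at h2
    exact h2.congr (fun t => by simp [div_eq_mul_inv])
  have part1 : Filter.Tendsto (fun t : ℝ =>
      ((∫ τ in (1:ℝ)..t, (τ ^ 2 - 1) ^ σ * Real.log (τ ^ 2 - 1))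
        - (2 / (2 * σ + 1)) * t ^ (2 * σ + 1) * Real.log t
        + (2 / (2 * σ + 1) ^ 2) * t ^ (2 * σ + 1)) / t ^ (2 * σ + 1))
      Filter.atTop (nhds 0) := by
    have key := (int_h_tendsto σ hσ).add hconst
    rw [add_zero] at key
    refine key.congr' ?_
    filter_upwards [eventually_ge_atTop (1:ℝ)] with t ht
    rw [hsplit t ht, add_div]
  refine ⟨part1, ?_⟩
  -- second part
  have hloginv : Filter.Tendsto (fun t : ℝ => (Real.log t)⁻¹) atTop (nhds 0) :=
    Real.tendsto_log_atTop.inv_tendsto_atTop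
  have key2 := ((part1.mul_const ((2*σ+1)/2)).mul hloginv).add
    ((tendsto_const_nhds (x := (1:ℝ)) (f := atTop)).sub (hloginv.const_mul (1/(2*σ+1))))
  rw [zero_mul, zero_mul, mul_zero, zero_add, sub_zero] at key2
  refine key2.congr' ?_
  filter_upwards [eventually_ge_atTop (2:ℝ)] with t ht
  have ht1 : (1:ℝ) < t := by linarith
  have htp : (0:ℝ) < t^(2*σ+1) := Real.rpow_pos_of_pos (by linarith) _
  have hlog : (0:ℝ) < Real.log t := Real.log_pos ht1
  set I := ∫ τ in (1:ℝ)..t, (τ ^ 2 - 1) ^ σ * Real.log (τ ^ 2 - 1) with hI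
  set X := t^(2*σ+1) with hX
  set L := Real.log t with hL
  field_simp
  ring
end

section
/- Let β > 0, N > 0, and let B be a Young function with B(t) = N e^{t^β} for all t > t₀ (some t₀ > 0), with B(t) = ∫_0^t b(τ) dτ for a nondecreasing left-continuous b. Then the generalized left-continuous inverse b^{-1} satisfies: b^{-1}(t) = (log t)^{1/β} + ((1-β)/β²)(log t)^{1/β - 1} log log t - (log(Nβ)/β)(log t)^{1/β - 1} + o((log t)^{1/β - 1}) as t → ∞. -/
open Real MeasureTheory Filter

section
open Set

lemma aux_rpow_bound (d v : ℝ) (h1 : 1/2 ≤ v) (h2 : v ≤ 2) : v ^ d ≤ 2 ^ |d| := by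
  have hv : 0 < v := lt_of_lt_of_le (by norm_num) h1
  rw [Real.rpow_def_of_pos hv, Real.rpow_def_of_pos (by norm_num : (0:ℝ) < 2)]
  apply Real.exp_le_exp.2
  have hlog : |Real.log v| ≤ Real.log 2 := by
    rw [abs_le]
    constructor
    · have : Real.log (1/2) ≤ Real.log v := Real.log_le_log (by norm_num) h1
      rwa [one_div, Real.log_inv] at this
    · exact Real.log_le_log hv h2
  calc Real.log v * d ≤ |Real.log v * d| := le_abs_self _
    _ = |Real.log v| * |d| := abs_mul _ _
    _ ≤ Real.log 2 * |d| := mul_le_mul_of_nonneg_right hlog (abs_nonneg d)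

lemma taylor2 (a : ℝ) : ∃ C, 0 < C ∧ ∀ h : ℝ, |h| ≤ 1/2 → |(1+h) ^ a - 1 - a*h| ≤ C * h^2 := by
  set K : ℝ := |a-1| * 2 ^ |a-2| with hK
  have hKnn : 0 ≤ K := mul_nonneg (abs_nonneg _) (Real.rpow_nonneg (by norm_num) _)
  -- inner bound
  have hm : ∀ t : ℝ, |t| ≤ 1/2 → |(1+t) ^ (a-1) - 1| ≤ K * |t| := by
    intro t ht
    have h1 : ∀ x ∈ Set.Icc (-(1/2):ℝ) (1/2),
        HasDerivWithinAt (fun u => (1+u) ^ (a-1)) (1 * (a-1) * (1+x) ^ (a-1-1)) (Set.Icc (-(1/2):ℝ) (1/2)) x := by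
      intro x hx
      have hx0 : (1:ℝ)+x ≠ 0 := by
        have := hx.1; nlinarith [hx.1]
      exact (((hasDerivAt_id x).const_add 1).rpow_const (Or.inl hx0)).hasDerivWithinAt
    have h2 : ∀ x ∈ Set.Icc (-(1/2):ℝ) (1/2), ‖1 * (a-1) * (1+x) ^ (a-1-1)‖ ≤ K := by
      intro x hx
      rw [one_mul, Real.norm_eq_abs, abs_mul]
      have hb : (1+x) ^ (a-1-1) ≤ 2 ^ |a-2| := by
        have : a - 1 - 1 = a - 2 := by ring
        rw [this]
        exact aux_rpow_bound _ _ (by linarith [hx.1]) (by linarith [hx.2])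
      have hpos : 0 ≤ (1+x) ^ (a-1-1) := Real.rpow_nonneg (by linarith [hx.1]) _
      rw [abs_of_nonneg hpos]
      exact mul_le_mul_of_nonneg_left hb (abs_nonneg _)
    have hmem : t ∈ Set.Icc (-(1/2):ℝ) (1/2) := by
      rw [Set.mem_Icc]; constructor <;> [linarith [neg_abs_le t]; linarith [le_abs_self t]]
    have h0mem : (0:ℝ) ∈ Set.Icc (-(1/2):ℝ) (1/2) := by norm_num
    have := Convex.norm_image_sub_le_of_norm_hasDerivWithin_le h1 h2 (convex_Icc _ _) h0mem hmem
    simpa [Real.norm_eq_abs] using this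
  refine ⟨|a| * K + 1, by positivity, fun h hh => ?_⟩
  -- outer MVT on uIcc 0 h
  have habs : ∀ x ∈ Set.uIcc (0:ℝ) h, |x| ≤ |h| := by
    intro x hx
    rcases Set.mem_uIcc.1 hx with ⟨h1, h2⟩ | ⟨h1, h2⟩
    · rw [abs_of_nonneg h1]; exact le_trans h2 (le_abs_self h)
    · rw [abs_of_nonpos h2]; exact le_trans (neg_le_neg h1) (neg_le_abs h)
  have h1 : ∀ x ∈ Set.uIcc (0:ℝ) h,
      HasDerivWithinAt (fun u => (1+u) ^ a - 1 - a*u) (1 * a * (1+x) ^ (a-1) - a) (Set.uIcc (0:ℝ) h) x := by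
    intro x hx
    have hx2 : |x| ≤ 1/2 := le_trans (habs x hx) hh
    have hx0 : (1:ℝ)+x ≠ 0 := by
      have := neg_abs_le x; have := abs_le.1 hx2; nlinarith [(abs_le.1 hx2).1]
    have d1 : HasDerivAt (fun u : ℝ => (1+u) ^ a) (1 * a * (1+x) ^ (a-1)) x :=
      ((hasDerivAt_id x).const_add 1).rpow_const (Or.inl hx0)
    have d2 : HasDerivAt (fun u : ℝ => (1+u) ^ a - 1 - a*u) (1 * a * (1+x) ^ (a-1) - a) x := by
      exact ((d1.sub_const 1).sub ((hasDerivAt_id x).const_mul a)).congr_deriv (by ring)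
    exact d2.hasDerivWithinAt
  have h2 : ∀ x ∈ Set.uIcc (0:ℝ) h, ‖1 * a * (1+x) ^ (a-1) - a‖ ≤ |a| * K * |h| := by
    intro x hx
    have hx2 : |x| ≤ 1/2 := le_trans (habs x hx) hh
    have : 1 * a * (1+x) ^ (a-1) - a = a * ((1+x) ^ (a-1) - 1) := by ring
    rw [this, Real.norm_eq_abs, abs_mul]
    calc |a| * |(1+x) ^ (a-1) - 1| ≤ |a| * (K * |x|) :=
          mul_le_mul_of_nonneg_left (hm x hx2) (abs_nonneg a)
      _ ≤ |a| * (K * |h|) := by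
          apply mul_le_mul_of_nonneg_left _ (abs_nonneg a)
          exact mul_le_mul_of_nonneg_left (habs x hx) hKnn
      _ = |a| * K * |h| := by ring
  have hmem : h ∈ Set.uIcc (0:ℝ) h := Set.right_mem_uIcc
  have h0mem : (0:ℝ) ∈ Set.uIcc (0:ℝ) h := Set.left_mem_uIcc
  have key := Convex.norm_image_sub_le_of_norm_hasDerivWithin_le h1 h2 (convex_uIcc _ _) h0mem hmem
  simp only [Real.norm_eq_abs, add_zero, mul_zero, sub_zero, Real.one_rpow, sub_self] at key
  have hsq : |h| * |h| = h^2 := by rw [← sq_abs h]; ring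
  calc |(1+h) ^ a - 1 - a*h| ≤ |a| * K * |h| * |h| := key
    _ = |a| * K * h^2 := by rw [mul_assoc, hsq]
    _ ≤ (|a| * K + 1) * h^2 := by nlinarith [sq_nonneg h]



lemma rtend (c₁ c₂ γ : ℝ) (hγ : 0 < γ) :
    Tendsto (fun y : ℝ => (c₁ * Real.log y + c₂) / y ^ γ) atTop (nhds 0) := by
  have h1 : Tendsto (fun y : ℝ => c₁ * (Real.log y / y ^ γ)) atTop (nhds (c₁ * 0)) :=
    ((isLittleO_log_rpow_atTop hγ).tendsto_div_nhds_zero).const_mul c₁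
  have h2 : Tendsto (fun y : ℝ => c₂ * (y ^ γ)⁻¹) atTop (nhds (c₂ * 0)) :=
    ((tendsto_rpow_atTop hγ).inv_tendsto_atTop).const_mul c₂
  have := h1.add h2
  simp only [mul_zero, add_zero] at this
  refine this.congr fun y => ?_
  ring

lemma Ldiv (β c γ : ℝ) (hβ : 0 < β) :
    Tendsto (fun y : ℝ => (y ^ β + ((β-1) * Real.log y + c)) / y ^ β) atTop (nhds 1) := by
  have h1 := rtend (β-1) c β hβ
  have : Tendsto (fun y : ℝ => 1 + ((β-1) * Real.log y + c) / y ^ β) atTop (nhds (1 + 0)) :=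
    tendsto_const_nhds.add h1
  rw [add_zero] at this
  refine Tendsto.congr' ?_ this
  filter_upwards [eventually_gt_atTop (0:ℝ)] with y hy
  have hp : y ^ β ≠ 0 := (Real.rpow_pos_of_pos hy β).ne'
  field_simp

lemma Ptop (β c : ℝ) (hβ : 0 < β) :
    Tendsto (fun y : ℝ => y ^ β + (β-1) * Real.log y + c) atTop atTop := by
  have := Tendsto.pos_mul_atTop one_pos (Ldiv β c β hβ) (tendsto_rpow_atTop hβ)
  refine Tendsto.congr' ?_ this
  filter_upwards [eventually_gt_atTop (0:ℝ)] with y hy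
  have hp : y ^ β ≠ 0 := (Real.rpow_pos_of_pos hy β).ne'
  field_simp
  ring

lemma Glim (β N : ℝ) (hβ : 0 < β) (hN : 0 < N) :
    Tendsto (fun y : ℝ =>
      (y - (y ^ β + (β-1)*Real.log y + Real.log (N*β)) ^ (1/β)
        - ((1 - β) / β ^ 2) * (y ^ β + (β-1)*Real.log y + Real.log (N*β)) ^ (1/β - 1)
            * Real.log (y ^ β + (β-1)*Real.log y + Real.log (N*β))
        + (Real.log (N * β) / β) * (y ^ β + (β-1)*Real.log y + Real.log (N*β)) ^ (1/β - 1))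
      / (y ^ β + (β-1)*Real.log y + Real.log (N*β)) ^ (1/β - 1)) atTop (nhds 0) := by
  set c : ℝ := Real.log (N*β) with hc
  set L : ℝ → ℝ := fun y => y ^ β + (β-1)*Real.log y + c with hLdef
  set r : ℝ → ℝ := fun y => (1-β)*Real.log y - c with hrdef
  -- basic limits
  have hLtop : Tendsto L atTop atTop := Ptop β c hβ
  have hrL : Tendsto (fun y => r y / L y) atTop (nhds 0) := by
    have h1 : Tendsto (fun y => ((1-β) * Real.log y + (-c)) / y ^ β) atTop (nhds 0) := rtend _ _ β hβ
    have h2 := Ldiv β c β hβ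
    have := h1.div h2 one_ne_zero
    rw [zero_div] at this
    refine Tendsto.congr' ?_ this
    filter_upwards [eventually_gt_atTop (0:ℝ), hLtop.eventually (eventually_gt_atTop (0:ℝ))] with y hy hLy
    have hp : y ^ β ≠ 0 := (Real.rpow_pos_of_pos hy β).ne'
    have hL0 : L y ≠ 0 := hLy.ne'
    have hB : y ^ β + ((β-1) * Real.log y + c) ≠ 0 := fun h => hL0 (by simp only [hLdef]; linarith)
    simp only [Pi.div_apply, hrdef, hLdef]
    field_simp
    ring
  have hr2L : Tendsto (fun y => (r y)^2 / L y) atTop (nhds 0) := by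
    have hβ2 : 0 < β/2 := by linarith
    have h5a : Tendsto (fun y => ((1-β) * Real.log y + (-c)) / y ^ (β/2)) atTop (nhds 0) := rtend _ _ _ hβ2
    have h2 := Ldiv β c β hβ
    have := (h5a.mul h5a).div h2 one_ne_zero
    rw [mul_zero, zero_div] at this
    refine Tendsto.congr' ?_ this
    filter_upwards [eventually_gt_atTop (0:ℝ), hLtop.eventually (eventually_gt_atTop (0:ℝ))] with y hy hLy
    have hq : y ^ (β/2) * y ^ (β/2) = y ^ β := by
      rw [← Real.rpow_add hy]; norm_num
    have hqne : y ^ (β/2) ≠ 0 := (Real.rpow_pos_of_pos hy _).ne'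
    have hL0 : L y ≠ 0 := hLy.ne'
    have hB : y ^ β + ((β-1) * Real.log y + c) ≠ 0 := fun h => hL0 (by simp only [hLdef]; linarith)
    simp only [Pi.div_apply, hrdef, hLdef]
    rw [div_mul_div_comm, hq]
    field_simp
    ring
  -- Taylor bound
  obtain ⟨C, hC0, hC⟩ := taylor2 (1/β)
  -- the two pieces
  have T1 : Tendsto (fun y => L y * ((1 + r y / L y) ^ (1/β) - 1 - (1/β)*(r y / L y)))
      atTop (nhds 0) := by
    apply squeeze_zero_norm' ?_ (by simpa using hr2L.const_mul C)
    filter_upwards [hLtop.eventually (eventually_ge_atTop (1:ℝ)),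
      NormedAddCommGroup.tendsto_nhds_zero.mp hrL (1/2) (by norm_num)] with y hL1 hsm
    have hLpos : (0:ℝ) < L y := lt_of_lt_of_le one_pos hL1
    have hL0 : L y ≠ 0 := hLpos.ne'
    have hsm' : |r y / L y| ≤ 1/2 := by rw [Real.norm_eq_abs] at hsm; linarith
    have hk := hC (r y / L y) hsm'
    rw [Real.norm_eq_abs, abs_mul, abs_of_pos hLpos]
    calc L y * |(1 + r y / L y) ^ (1/β) - 1 - (1/β)*(r y / L y)|
        ≤ L y * (C * (r y / L y)^2) := mul_le_mul_of_nonneg_left hk hLpos.le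
      _ = C * ((r y)^2 / L y) := by field_simp
  have T2 : Tendsto (fun y => (1/β)^2*(1-β) * Real.log (1 + r y / L y)) atTop (nhds 0) := by
    have hcont : Tendsto (fun y => 1 + r y / L y) atTop (nhds 1) := by
      simpa using tendsto_const_nhds.add hrL
    have hlog : Tendsto (fun y => Real.log (1 + r y / L y)) atTop (nhds 0) := by
      have := (Real.continuousAt_log one_ne_zero).tendsto.comp hcont
      simpa [Function.comp_def] using this
    have := hlog.const_mul ((1/β)^2*(1-β))
    rwa [mul_zero] at this
  have Tsum := T1.add T2
  rw [add_zero] at Tsum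
  refine Tendsto.congr' ?_ Tsum
  filter_upwards [eventually_ge_atTop (1:ℝ), hLtop.eventually (eventually_ge_atTop (1:ℝ))]
    with y hy hL1
  have hy0 : (0:ℝ) < y := lt_of_lt_of_le one_pos hy
  simp only [hLdef, hrdef]
  set ly := Real.log y with hly
  set M := y ^ β + (β-1)*ly + c with hMdef
  have hLpos : (0:ℝ) < M := by simp only [hLdef] at hL1; exact lt_of_lt_of_le one_pos hL1
  have hL0 : M ≠ 0 := hLpos.ne'
  have hA : y ^ β = M + ((1-β)*ly - c) := by rw [hMdef]; ring
  have hyβ : (0:ℝ) < y ^ β := Real.rpow_pos_of_pos hy0 β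
  have h1h : 1 + ((1-β)*ly - c) / M = y ^ β / M := by rw [hA]; field_simp
  have h1hpos : (0:ℝ) < 1 + ((1-β)*ly - c) / M := by rw [h1h]; positivity
  have hApos : (0:ℝ) < M ^ (1/β) := Real.rpow_pos_of_pos hLpos _
  have hyeq : y = M ^ (1/β) * (1 + ((1-β)*ly - c) / M) ^ (1/β) := by
    rw [← Real.mul_rpow hLpos.le h1hpos.le, h1h]
    have hmm : M * (y ^ β / M) = y ^ β := by field_simp
    rw [hmm, one_div, Real.rpow_rpow_inv hy0.le hβ.ne']
  have hlog1h : Real.log (1 + ((1-β)*ly - c) / M) = β * ly - Real.log M := by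
    rw [h1h, Real.log_div hyβ.ne' hL0, Real.log_rpow hy0, hly]
  have hLa : M ^ (1/β - 1) = M ^ (1/β) / M := by rw [Real.rpow_sub hLpos, Real.rpow_one]
  rw [hlog1h, hLa]
  rw [hyeq]
  field_simp
  ring


lemma b_eq (β N t₀ : ℝ) (hβ : 0 < β) (ht₀ : 0 < t₀)
    (b B : ℝ → ℝ) (hmono : Monotone b)
    (hB : ∀ t : ℝ, 0 ≤ t → B t = ∫ τ in (0:ℝ)..t, b τ)
    (hBform : ∀ t > t₀, B t = N * Real.exp (t ^ β)) :
    ∀ t > t₀, b t = N * (Real.exp (t ^ β) * (β * t ^ (β - 1))) := by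
  intro t ht
  have ht0 : 0 < t := lt_trans ht₀ ht
  have hF : HasDerivAt (fun y : ℝ => N * Real.exp (y ^ β))
      (N * (Real.exp (t ^ β) * (β * t ^ (β-1)))) t := by
    have h1 : HasDerivAt (fun y : ℝ => y ^ β) (β * t ^ (β-1)) t :=
      Real.hasDerivAt_rpow_const (Or.inl ht0.ne')
    exact h1.exp.const_mul N
  have hslope := hasDerivAt_iff_tendsto_slope.1 hF
  have hint : ∀ u v : ℝ, IntervalIntegrable b MeasureTheory.volume u v :=
    fun u v => (hmono.monotoneOn _).intervalIntegrable
  have hdiff : ∀ u v : ℝ, 0 ≤ u → u ≤ v → B v - B u = ∫ τ in u..v, b τ := by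
    intro u v hu huv
    rw [hB v (le_trans hu huv), hB u hu]
    exact intervalIntegral.integral_interval_sub_left (hint 0 v) (hint 0 u)
  apply le_antisymm
  · have hsub : Set.Ioi t ⊆ {t}ᶜ := fun x hx => ne_of_gt hx
    refine ge_of_tendsto (hslope.mono_left (nhdsWithin_mono _ hsub)) ?_
    filter_upwards [self_mem_nhdsWithin] with y hy
    have hyt : t < y := hy
    have hby : B y - B t = ∫ τ in t..y, b τ := hdiff t y ht0.le hyt.le
    have hlow : b t * (y - t) ≤ ∫ τ in t..y, b τ := by
      have h := intervalIntegral.integral_mono_on hyt.le intervalIntegrable_const (hint t y)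
        (fun x hx => hmono hx.1)
      simpa [intervalIntegral.integral_const, smul_eq_mul, mul_comm] using h
    rw [slope_def_field]
    rw [le_div_iff₀ (by linarith : (0:ℝ) < y - t)]
    have hFy : N * Real.exp (y ^ β) = B y := (hBform y (lt_trans ht hyt)).symm
    have hFt : N * Real.exp (t ^ β) = B t := (hBform t ht).symm
    rw [hFy, hFt]
    linarith [hlow, hby]
  · have hsub : Set.Iio t ⊆ {t}ᶜ := fun x hx => ne_of_lt hx
    refine le_of_tendsto (hslope.mono_left (nhdsWithin_mono _ hsub)) ?_
    filter_upwards [Ioo_mem_nhdsLT ht] with y hy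
    have hyt : y < t := hy.2
    have hy0 : 0 ≤ y := le_of_lt (lt_trans ht₀ hy.1)
    have hby : B t - B y = ∫ τ in y..t, b τ := hdiff y t hy0 hyt.le
    have hup : (∫ τ in y..t, b τ) ≤ b t * (t - y) := by
      have h := intervalIntegral.integral_mono_on hyt.le (hint y t) intervalIntegrable_const
        (fun x hx => hmono hx.2)
      simpa [intervalIntegral.integral_const, smul_eq_mul, mul_comm] using h
    rw [slope_def_field]
    have hFy : N * Real.exp (y ^ β) = B y := (hBform y hy.1).symm
    have hFt : N * Real.exp (t ^ β) = B t := (hBform t ht).symm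
    rw [hFy, hFt]
    rw [div_le_iff_of_neg (by linarith : y - t < 0)]
    nlinarith [hup, hby]

end

/-- Asymptotic expansion of the generalized left-continuous inverse `b⁻¹` of the
density `b` of a Young function `B` with `B(t) = N e^{t^β}` for large `t`:
`b⁻¹(t) = (log t)^{1/β} + ((1-β)/β²)(log t)^{1/β-1} log log t
          - (log(Nβ)/β)(log t)^{1/β-1} + o((log t)^{1/β-1})` as `t → ∞`. -/
theorem binv_asymptotics (β N t₀ : ℝ) (hβ : 0 < β) (hN : 0 < N) (ht₀ : 0 < t₀)
    (b B : ℝ → ℝ) (hmono : Monotone b) (hb0 : ∀ t ≤ (0:ℝ), b t = 0)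
    (hlc : ∀ x : ℝ, Filter.Tendsto b (nhdsWithin x (Set.Iio x)) (nhds (b x)))
    (hB : ∀ t : ℝ, 0 ≤ t → B t = ∫ τ in (0:ℝ)..t, b τ)
    (hBform : ∀ t > t₀, B t = N * Real.exp (t ^ β))
    (binv : ℝ → ℝ)
    (hbinv : ∀ s : ℝ, binv s = sInf {t : ℝ | 0 ≤ t ∧ s ≤ b t}) :
    Filter.Tendsto (fun t : ℝ =>
        (binv t - (Real.log t) ^ (1/β)
          - ((1 - β) / β ^ 2) * (Real.log t) ^ (1/β - 1) * Real.log (Real.log t)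
          + (Real.log (N * β) / β) * (Real.log t) ^ (1/β - 1))
        / (Real.log t) ^ (1/β - 1))
      Filter.atTop (nhds 0) := by
  have hbeq := b_eq β N t₀ hβ ht₀ b B hmono hB hBform
  -- b tends to infinity
  have hbtop : Tendsto b atTop atTop := by
    have hP := Ptop β (Real.log (N*β)) hβ
    have hexp := Real.tendsto_exp_atTop.comp hP
    refine Tendsto.congr' ?_ hexp
    filter_upwards [eventually_gt_atTop (max t₀ 1)] with y hy
    have hy1 : 1 < y := lt_of_le_of_lt (le_max_right _ _) hy
    have hy0 : 0 < y := lt_trans one_pos hy1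
    have hyt : t₀ < y := lt_of_le_of_lt (le_max_left _ _) hy
    have hNβ : 0 < N * β := mul_pos hN hβ
    simp only [Function.comp_apply]
    rw [hbeq y hyt]
    rw [Real.exp_add, Real.exp_add, Real.exp_log hNβ]
    rw [Real.rpow_def_of_pos hy0 (β-1)]
    ring_nf
  -- binv tends to infinity
  have hbinvtop : Tendsto binv atTop atTop := by
    rw [tendsto_atTop]
    intro M
    filter_upwards [eventually_gt_atTop (b (max M 0))] with s hs
    rw [hbinv s]
    have hSne : Set.Nonempty {t : ℝ | 0 ≤ t ∧ s ≤ b t} := by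
      obtain ⟨T, hT0, hTs⟩ :=
        ((eventually_ge_atTop (0:ℝ)).and (hbtop.eventually (eventually_ge_atTop s))).exists
      exact ⟨T, hT0, hTs⟩
    refine le_trans (le_max_left M 0) (le_csInf hSne ?_)
    intro u hu
    by_contra hlt
    push_neg at hlt
    exact absurd (le_trans hu.2 (hmono hlt.le)) (not_le.2 hs)
  -- key identity for log s
  have hkey : ∀ᶠ s in atTop,
      Real.log s = (binv s) ^ β + (β-1) * Real.log (binv s) + Real.log (N*β) := by
    filter_upwards [eventually_gt_atTop (0:ℝ),
      hbinvtop.eventually (eventually_gt_atTop t₀)] with s hs0 hxt₀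
    set x := binv s with hx
    have hx0 : 0 < x := lt_trans ht₀ hxt₀
    have hSbdd : BddBelow {t : ℝ | 0 ≤ t ∧ s ≤ b t} := ⟨0, fun u hu => hu.1⟩
    have hSne : Set.Nonempty {t : ℝ | 0 ≤ t ∧ s ≤ b t} := by
      obtain ⟨T, hT0, hTs⟩ :=
        ((eventually_ge_atTop (0:ℝ)).and (hbtop.eventually (eventually_ge_atTop s))).exists
      exact ⟨T, hT0, hTs⟩
    -- upper bound : b x ≤ s
    have hup : b x ≤ s := by
      refine le_of_tendsto (hlc x) ?_
      filter_upwards [self_mem_nhdsWithin] with u hu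
      rcases le_or_gt u 0 with h0 | h0
      · rw [hb0 u h0]; exact hs0.le
      · by_contra hcon
        push_neg at hcon
        have humem : u ∈ {t : ℝ | 0 ≤ t ∧ s ≤ b t} := ⟨h0.le, hcon.le⟩
        have : x ≤ u := by rw [hx, hbinv s]; exact csInf_le hSbdd humem
        exact absurd hu (not_lt.2 this)
    -- lower bound : s ≤ f x
    have hdown : s ≤ N * (Real.exp (x ^ β) * (β * x ^ (β-1))) := by
      have h1 : ContinuousAt (fun u : ℝ => u ^ β) x :=
        Real.continuousAt_rpow_const x β (Or.inl hx0.ne')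
      have h2 : ContinuousAt (fun u : ℝ => u ^ (β-1)) x :=
        Real.continuousAt_rpow_const x (β-1) (Or.inl hx0.ne')
      have hcont : ContinuousAt (fun u : ℝ => N * (Real.exp (u ^ β) * (β * u ^ (β-1)))) x :=
        (((Real.continuous_exp.continuousAt.comp h1).mul (h2.const_mul β)).const_mul N)
      refine ge_of_tendsto (hcont.tendsto.mono_left (nhdsWithin_le_nhds (s := Set.Ioi x))) ?_
      filter_upwards [self_mem_nhdsWithin] with u hu
      have hxu : x < u := hu
      have hub : s ≤ b u := by
        have hlt : sInf {t : ℝ | 0 ≤ t ∧ s ≤ b t} < u := by rw [← hbinv s, ← hx]; exact hxu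
        obtain ⟨w, hwS, hwu⟩ := (csInf_lt_iff hSbdd hSne).1 hlt
        exact le_trans hwS.2 (hmono hwu.le)
      rw [← hbeq u (lt_trans hxt₀ hxu)]
      exact hub
    have heqx : N * (Real.exp (x ^ β) * (β * x ^ (β-1))) = s :=
      le_antisymm (le_trans (le_of_eq (hbeq x hxt₀).symm) hup) hdown
    have hNβ : 0 < N * β := mul_pos hN hβ
    have hxp : (0:ℝ) < x ^ (β-1) := Real.rpow_pos_of_pos hx0 _
    rw [← heqx]
    have hre : N * (Real.exp (x ^ β) * (β * x ^ (β-1)))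
        = (N * β) * (x ^ (β-1) * Real.exp (x ^ β)) := by ring
    rw [hre, Real.log_mul hNβ.ne' (by positivity),
      Real.log_mul hxp.ne' (Real.exp_pos _).ne', Real.log_rpow hx0, Real.log_exp]
    ring
  -- conclude using Glim
  have hcomp := (Glim β N hβ hN).comp hbinvtop
  refine Tendsto.congr' ?_ hcomp
  filter_upwards [hkey] with s hs
  simp only [Function.comp_apply]
  rw [hs]
end

section
/- (Gradient integral bound for a one-dimensional test function.) Let β > 0, t₀ > 0 with e^{t^β} equal to the convex envelope Exp^β of exp^β for t ≥ t₀, and let τ₀ > 0 be such that e^{τ²/2}/(τ (log τ)²) ≥ e^{t₀^β} for all τ > τ₀. Define f(τ) = (τ²/2 - log τ - 2 log log τ)^{1/β} for τ > τ₀, and u(x) = sgn(x₁) ∫_{τ₀}^{|x₁|} f dτ for |x₁| ≥ τ₀, u(x) = 0 otherwise. Then med(u) = mv(u) = 0 and ∫_{ℝⁿ} Exp^β(|∇u|) dγₙ ≤ 1 + (2/√(2π)) ∫_{τ₀}^∞ dτ/(τ (log τ)²) < ∞. -/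
open Real MeasureTheory Filter
open scoped ENNReal NNReal

/-- The standard Gaussian probability measure `γₙ` on `ℝⁿ`. -/
noncomputable def gaussMeasure (n : ℕ) : Measure (EuclideanSpace ℝ (Fin n)) :=
  MeasureTheory.volume.withDensity (fun x =>
    ENNReal.ofReal ((2 * Real.pi) ^ (-(n : ℝ) / 2) * Real.exp (-‖x‖ ^ 2 / 2)))

/-- The signed decreasing rearrangement of `u` with respect to `γₙ`;
`med(u) = u°(1/2)`. -/
noncomputable def rearr {n : ℕ} (u : EuclideanSpace ℝ (Fin n) → ℝ) (s : ℝ) : ℝ :=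
  sInf {t : ℝ | gaussMeasure n {x | t < u x} ≤ ENNReal.ofReal s}

set_option maxHeartbeats 1000000 in
/-- Fubini reduction: integrating a function of the first coordinate against the Gaussian
measure reduces to a one-dimensional Gaussian integral. -/
lemma gaussAux (n : ℕ) (G : ℝ → ℝ) :
    ∫ x, G (x 0) ∂(gaussMeasure (n+1))
      = ∫ t, G t * ((2*Real.pi) ^ (-(1:ℝ)/2) * Real.exp (-t^2/2)) := by
  have h2π : (0:ℝ) < 2*π := by positivity
  have hρmeas : Measurable fun x : EuclideanSpace ℝ (Fin (n+1)) =>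
      ((2*π) ^ (-((n+1:ℕ):ℝ)/2) * Real.exp (-‖x‖^2/2)).toNNReal := by fun_prop
  have h1 : ∫ x, G (x 0) ∂(gaussMeasure (n+1))
      = ∫ (x : EuclideanSpace ℝ (Fin (n+1))),
          ((2*π) ^ (-((n+1:ℕ):ℝ)/2) * Real.exp (-‖x‖^2/2)) * G (x 0) := by
    rw [show gaussMeasure (n+1) = volume.withDensity (fun x =>
      (((2*π) ^ (-((n+1:ℕ):ℝ)/2) * Real.exp (-‖x‖^2/2)).toNNReal : ℝ≥0∞)) from rfl]
    rw [integral_withDensity_eq_integral_smul hρmeas]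
    congr 1; funext x
    rw [NNReal.smul_def, Real.coe_toNNReal _ (by positivity), smul_eq_mul]
  -- define H on pi space
  set H : (Fin (n+1) → ℝ) → ℝ := fun y =>
    ((2*π) ^ (-((n+1:ℕ):ℝ)/2) * Real.exp (-(∑ i, (y i)^2)/2)) * G (y 0) with hH
  have hnorm : ∀ x : EuclideanSpace ℝ (Fin (n+1)), ‖x‖^2 = ∑ i, (x i)^2 := by
    intro x
    rw [EuclideanSpace.norm_eq, Real.sq_sqrt (by positivity)]
    simp [sq_abs]
  have h2 : (∫ (x : EuclideanSpace ℝ (Fin (n+1))),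
          ((2*π) ^ (-((n+1:ℕ):ℝ)/2) * Real.exp (-‖x‖^2/2)) * G (x 0))
      = ∫ y : Fin (n+1) → ℝ, H y := by
    rw [← (EuclideanSpace.volume_preserving_symm_measurableEquiv_toLp (Fin (n+1))).integral_comp
      (MeasurableEquiv.toLp 2 (Fin (n+1) → ℝ)).symm.measurableEmbedding H]
    congr 1; funext x
    simp only [hH, MeasurableEquiv.toLp_symm_apply]
    rw [hnorm]
  set φ := MeasurableEquiv.piFinSuccAbove (fun _ : Fin (n+1) => ℝ) 0 with hφdef
  have hφ := volume_preserving_piFinSuccAbove (fun _ : Fin (n+1) => ℝ) 0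
  have h3 : (∫ y : Fin (n+1) → ℝ, H y)
      = ∫ z : ℝ × (Fin n → ℝ), H (φ.symm z) := by
    rw [(hφ.symm φ).integral_comp φ.symm.measurableEmbedding H]
  have h4 : ∀ z : ℝ × (Fin n → ℝ), H (φ.symm z)
      = (G z.1 * ((2*π) ^ (-(1:ℝ)/2) * Real.exp (-z.1^2/2)))
        * (((2*π) ^ (-(n:ℝ)/2)) * Real.exp (-(∑ j, (z.2 j)^2)/2)) := by
    intro z
    have e0 : (φ.symm z) 0 = z.1 := by
      simp [hφdef, MeasurableEquiv.piFinSuccAbove]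
    have esum : ∑ i, ((φ.symm z) i)^2 = z.1^2 + ∑ j, (z.2 j)^2 := by
      rw [Fin.sum_univ_succAbove _ 0, e0]
      simp [hφdef, MeasurableEquiv.piFinSuccAbove]
    rw [hH]
    simp only [e0, esum]
    have hc : ((2*π) : ℝ) ^ (-((n+1:ℕ):ℝ)/2)
        = (2*π) ^ (-(1:ℝ)/2) * (2*π) ^ (-(n:ℝ)/2) := by
      rw [← Real.rpow_add h2π]
      congr 1
      push_cast; ring
    have he : Real.exp (-(z.1^2 + ∑ j, (z.2 j)^2)/2)
        = Real.exp (-z.1^2/2) * Real.exp (-(∑ j, (z.2 j)^2)/2) := by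
      rw [← Real.exp_add]; congr 1; ring
    rw [hc, he]; ring
  have h5 : (∫ z : ℝ × (Fin n → ℝ), H (φ.symm z))
      = (∫ t, G t * ((2*π) ^ (-(1:ℝ)/2) * Real.exp (-t^2/2)))
        * (∫ w : Fin n → ℝ, ((2*π) ^ (-(n:ℝ)/2)) * Real.exp (-(∑ j, (w j)^2)/2)) := by
    simp_rw [h4]
    rw [show (volume : Measure (ℝ × (Fin n → ℝ)))
      = (volume : Measure ℝ).prod (volume : Measure (Fin n → ℝ)) from rfl]
    exact integral_prod_mul (μ := (volume : Measure ℝ)) (ν := (volume : Measure (Fin n → ℝ)))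
      (fun t => G t * ((2*π) ^ (-(1:ℝ)/2) * Real.exp (-t^2/2)))
      (fun w => ((2*π) ^ (-(n:ℝ)/2)) * Real.exp (-(∑ j, (w j)^2)/2))
  have h6 : (∫ w : Fin n → ℝ, ((2*π) ^ (-(n:ℝ)/2)) * Real.exp (-(∑ j, (w j)^2)/2)) = 1 := by
    have := (EuclideanSpace.volume_preserving_symm_measurableEquiv_toLp (Fin n)).integral_comp
      (MeasurableEquiv.toLp 2 (Fin n → ℝ)).symm.measurableEmbedding
      (fun w : Fin n → ℝ => Real.exp (-(∑ j, (w j)^2)/2))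
    have hval : (∫ x : EuclideanSpace ℝ (Fin n), Real.exp (-(1/2) * ‖x‖^2))
        = (2*π) ^ ((n:ℝ)/2) := by
      rw [GaussianFourier.integral_rexp_neg_mul_sq_norm (by norm_num : (0:ℝ) < 1/2)]
      rw [finrank_euclideanSpace_fin]
      congr 1
      ring
    rw [integral_const_mul, ← this]
    have : ∀ x : EuclideanSpace ℝ (Fin n),
        Real.exp (-(∑ j, ((MeasurableEquiv.toLp 2 (Fin n → ℝ)).symm x j)^2)/2)
          = Real.exp (-(1/2) * ‖x‖^2) := by
      intro x
      have : ∑ j, ((MeasurableEquiv.toLp 2 (Fin n → ℝ)).symm x j)^2 = ‖x‖^2 := by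
        rw [EuclideanSpace.norm_eq, Real.sq_sqrt (by positivity)]
        simp [sq_abs]
      rw [this]; ring_nf
    simp_rw [this, hval]
    rw [← Real.rpow_add h2π]
    have : -(n:ℝ)/2 + (n:ℝ)/2 = 0 := by ring
    rw [this, Real.rpow_zero]
  rw [h1, h2, h3, h5, h6, mul_one]

/-- The one-dimensional Gaussian has total mass one. -/
lemma gauss_one_dim : (∫ t : ℝ, (2*Real.pi) ^ (-(1:ℝ)/2) * Real.exp (-t^2/2)) = 1 := by
  have h2π : (0:ℝ) < 2*π := by positivity
  rw [integral_const_mul]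
  rw [show (fun t : ℝ => Real.exp (-t^2/2)) = fun t : ℝ => Real.exp (-(1/2)*t^2) from
    funext (fun t => by ring_nf)]
  rw [integral_gaussian (1/2)]
  rw [show (π/(1/2) : ℝ) = 2*π by ring]
  rw [Real.sqrt_eq_rpow, ← Real.rpow_add h2π]
  norm_num

/-- One-dim Gaussian density is integrable. -/
lemma gauss_one_dim_integrable :
    Integrable (fun t : ℝ => (2*Real.pi) ^ (-(1:ℝ)/2) * Real.exp (-t^2/2)) := by
  have : Integrable (fun t : ℝ => Real.exp (-(1/2)*t^2)) :=
    integrable_exp_neg_mul_sq (by norm_num)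
  have h := this.const_mul ((2*Real.pi) ^ (-(1:ℝ)/2))
  convert h using 2 with t
  ring_nf

/-- The Gaussian measure is a probability measure. -/
lemma gauss_univ (n : ℕ) : gaussMeasure (n+1) Set.univ = 1 := by
  have h := gaussAux n (fun _ => (1:ℝ))
  simp only [one_mul] at h
  rw [gauss_one_dim, MeasureTheory.integral_const, smul_eq_mul, mul_one] at h
  exact (ENNReal.toReal_eq_one_iff _).1 h

/-- The Gaussian measure is symmetric under negation. -/
lemma gauss_map_neg (m : ℕ) :
    Measure.map Neg.neg (gaussMeasure m) = gaussMeasure m := by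
  have hρ : Measurable fun x : EuclideanSpace ℝ (Fin m) =>
      ENNReal.ofReal ((2*π) ^ (-(m:ℝ)/2) * Real.exp (-‖x‖^2/2)) := by fun_prop
  ext s hs
  rw [Measure.map_apply measurable_neg hs]
  show (volume.withDensity _) (Neg.neg ⁻¹' s) = (volume.withDensity _) s
  rw [withDensity_apply _ (measurable_neg hs), withDensity_apply _ hs]
  conv_rhs => rw [← Measure.map_neg_eq_self (volume : Measure (EuclideanSpace ℝ (Fin m)))]
  rw [MeasureTheory.setLIntegral_map hs hρ measurable_neg]
  apply lintegral_congr
  intro x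
  simp [norm_neg]

/-- Integrability of `1/(τ (log τ)²)` on `(τ₀, ∞)`. -/
lemma int_inv_log_sq {τ₀ : ℝ} (hτ₀ : 1 < τ₀) :
    IntegrableOn (fun τ => 1 / (τ * Real.log τ ^ 2)) (Set.Ioi τ₀) := by
  apply integrableOn_Ioi_deriv_of_nonneg (g := fun x => -(Real.log x)⁻¹) (l := 0)
  · apply ContinuousAt.continuousWithinAt
    have hτ0 : τ₀ ≠ 0 := by positivity
    exact ((Real.continuousAt_log hτ0).inv₀ (ne_of_gt (Real.log_pos hτ₀))).neg
  · intro x hx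
    have hx1 : 1 < x := lt_trans hτ₀ hx
    have hx0 : 0 < x := lt_trans one_pos hx1
    have hlx : Real.log x ≠ 0 := ne_of_gt (Real.log_pos hx1)
    have h1 : HasDerivAt Real.log x⁻¹ x := Real.hasDerivAt_log (ne_of_gt hx0)
    have h2 : HasDerivAt (fun y => (Real.log y)⁻¹) (-(x⁻¹)/(Real.log x)^2) x := h1.inv hlx
    have h3 := h2.fun_neg
    refine h3.congr_deriv ?_
    rw [neg_div, neg_neg, one_div, mul_inv, div_eq_mul_inv]
  · intro x hx
    have hx1 : 1 < x := lt_trans hτ₀ hx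
    have hx0 : 0 < x := lt_trans one_pos hx1
    exact div_nonneg one_pos.le (mul_nonneg hx0.le (sq_nonneg _))
  · have : Tendsto (fun x : ℝ => (Real.log x)⁻¹) atTop (nhds 0) :=
      Real.tendsto_log_atTop.inv_tendsto_atTop
    simpa using this.neg

/-- Gradient integral bound for the one-dimensional test function: with
`f(τ) = (τ²/2 - log τ - 2 log log τ)^{1/β}` for `τ > τ₀`, and
`u(x) = sgn(x₁) ∫_{τ₀}^{|x₁|} f` for `|x₁| ≥ τ₀`, `u(x) = 0` otherwise
(so that `|∇u(x)| = g(x) := f(|x₁|)` for `|x₁| ≥ τ₀` and `0` otherwise),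
one has `med(u) = mv(u) = 0` and
`∫ Exp^β(|∇u|) dγₙ ≤ 1 + (2/√(2π)) ∫_{τ₀}^∞ dτ/(τ (log τ)²) < ∞`. -/
theorem gradient_bound_one_dimensional_test_function (n : ℕ)
    (β t₀ τ₀ : ℝ) (hβ : 0 < β) (ht₀ : 0 < t₀) (hτ₀ : 1 < τ₀)
    (E : ℝ → ℝ) (hEconv : ConvexOn ℝ (Set.Ici 0) E)
    (hEeq : ∀ t ≥ t₀, E t = Real.exp (t ^ β))
    (hEle : ∀ t ≥ (0:ℝ), E t ≤ Real.exp (t ^ β))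
    (hE0 : E 0 ≤ 1)
    (hτ : ∀ τ > τ₀,
      Real.exp (t₀ ^ β) ≤ Real.exp (τ ^ 2 / 2) / (τ * (Real.log τ) ^ 2))
    (hpos : ∀ τ > τ₀, 0 < τ ^ 2 / 2 - Real.log τ - 2 * Real.log (Real.log τ))
    (f : ℝ → ℝ)
    (hf : ∀ τ > τ₀,
      f τ = (τ ^ 2 / 2 - Real.log τ - 2 * Real.log (Real.log τ)) ^ (1/β))
    (u g : EuclideanSpace ℝ (Fin (n+1)) → ℝ)
    (hu : ∀ x, u x = if τ₀ ≤ |x 0|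
      then Real.sign (x 0) * ∫ τ in τ₀..|x 0|, f τ else 0)
    (hg : ∀ x, g x = if τ₀ ≤ |x 0| then f (|x 0|) else 0) :
    (∫ x, u x ∂(gaussMeasure (n+1))) = 0 ∧
    rearr u (1/2) = 0 ∧
    (∫ x, E (g x) ∂(gaussMeasure (n+1)))
      ≤ 1 + (2 / Real.sqrt (2 * Real.pi))
          * ∫ τ in Set.Ioi τ₀, 1 / (τ * (Real.log τ) ^ 2) ∧
    IntegrableOn (fun τ => 1 / (τ * (Real.log τ) ^ 2)) (Set.Ioi τ₀) := by
  have h2π : (0:ℝ) < 2*π := by positivity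
  have hτ₀0 : (0:ℝ) < τ₀ := lt_trans one_pos hτ₀
  set γ := gaussMeasure (n+1) with hγdef
  -- part 4
  have part4 : IntegrableOn (fun τ => 1 / (τ * (Real.log τ) ^ 2)) (Set.Ioi τ₀) :=
    int_inv_log_sq hτ₀
  -- measurability of u via a measurable model V
  set F₀ : ℝ → ℝ :=
    fun τ => (τ^2/2 - Real.log τ - 2 * Real.log (Real.log τ)) ^ ((1:ℝ)/β) with hF₀def
  have hrpow_cont : Continuous fun b : ℝ => b ^ ((1:ℝ)/β) := by
    rw [continuous_iff_continuousAt]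
    intro b
    exact Real.continuousAt_rpow_const b (1/β) (Or.inr (by positivity))
  have hF₀cont : ContinuousOn F₀ (Set.Ioi 1) := by
    apply hrpow_cont.comp_continuousOn
    refine ContinuousOn.sub (ContinuousOn.sub ?_ ?_) ?_
    · exact ((continuous_pow 2).div_const 2).continuousOn
    · exact Real.continuousOn_log.mono (fun τ hτ' => by
        simp only [Set.mem_compl_iff, Set.mem_singleton_iff]
        exact ne_of_gt (lt_trans one_pos hτ'))
    · refine continuousOn_const.mul (ContinuousOn.comp Real.continuousOn_log
        (Real.continuousOn_log.mono (fun τ hτ' => by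
          simp only [Set.mem_compl_iff, Set.mem_singleton_iff]
          exact ne_of_gt (lt_trans one_pos hτ'))) ?_)
      intro τ hτ'
      simp only [Set.mem_compl_iff, Set.mem_singleton_iff]
      exact ne_of_gt (Real.log_pos hτ')
  have hF₀meas : Measurable F₀ := by
    apply hrpow_cont.measurable.comp
    exact (((measurable_id.pow_const 2).div_const 2).sub Real.measurable_log).sub
      ((Real.measurable_log.comp Real.measurable_log).const_mul 2)
  set F₁ : ℝ → ℝ := fun τ => if τ₀ < τ then F₀ τ else 0 with hF₁def
  have hF₁meas : Measurable F₁ :=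
    Measurable.ite measurableSet_Ioi hF₀meas measurable_const
  have hF₁ii : ∀ a b : ℝ, IntervalIntegrable F₁ volume a b := by
    intro a b
    rw [intervalIntegrable_iff]
    set M := max τ₀ (max a b) with hM
    obtain ⟨C, hC⟩ := (isCompact_Icc (a := τ₀) (b := M)).exists_bound_of_continuousOn
      (hF₀cont.mono (fun x hx => lt_of_lt_of_le hτ₀ hx.1))
    apply Integrable.mono' (g := fun _ => max C 0)
      (integrableOn_const measure_Ioc_lt_top.ne)
      (hF₁meas.aestronglyMeasurable.restrict)
    refine ae_restrict_of_forall_mem measurableSet_Ioc (fun x hx => ?_)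
    by_cases h : τ₀ < x
    · have hxM : x ∈ Set.Icc τ₀ M := ⟨h.le, le_trans hx.2 (le_max_right _ _)⟩
      calc ‖F₁ x‖ = ‖F₀ x‖ := by rw [hF₁def]; simp [h]
        _ ≤ C := hC x hxM
        _ ≤ max C 0 := le_max_left _ _
    · have : F₁ x = 0 := by rw [hF₁def]; simp [h]
      rw [this]
      simp [le_max_right C 0]
  set P : ℝ → ℝ := fun s => ∫ τ in τ₀..s, F₁ τ with hPdef
  have hPcont : Continuous P := intervalIntegral.continuous_primitive hF₁ii τ₀
  have hsign : Measurable Real.sign := by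
    have : Real.sign = fun r : ℝ => if r < 0 then (-1:ℝ) else if 0 < r then 1 else 0 := by
      funext r; rfl
    rw [this]
    exact Measurable.ite (measurableSet_lt measurable_id measurable_const) measurable_const
      (Measurable.ite (measurableSet_lt measurable_const measurable_id) measurable_const
        measurable_const)
  set V : ℝ → ℝ := fun t => if τ₀ ≤ |t| then Real.sign t * P |t| else 0 with hVdef
  have hVmeas : Measurable V := by
    apply Measurable.ite (measurableSet_le measurable_const continuous_abs.measurable)
    · exact hsign.mul (hPcont.measurable.comp continuous_abs.measurable)
    · exact measurable_const
  have hproj : Measurable fun x : EuclideanSpace ℝ (Fin (n+1)) => x 0 :=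
    (EuclideanSpace.proj (0 : Fin (n+1))).continuous.measurable
  have huV : ∀ x, u x = V (x 0) := by
    intro x
    rw [hu x]
    show _ = if τ₀ ≤ |x 0| then Real.sign (x 0) * P |x 0| else 0
    by_cases h : τ₀ ≤ |x 0|
    · rw [if_pos h, if_pos h]
      congr 1
      show (∫ τ in τ₀..|x 0|, f τ) = ∫ τ in τ₀..|x 0|, F₁ τ
      rw [intervalIntegral.integral_of_le h, intervalIntegral.integral_of_le h]
      apply setIntegral_congr_fun measurableSet_Ioc
      intro τ hτ'
      have hττ₀ : τ₀ < τ := hτ'.1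
      rw [hf τ hττ₀, hF₁def]
      simp only [if_pos hττ₀, hF₀def]
    · rw [if_neg h, if_neg h]
  have hUmeas : Measurable u := by
    have : u = fun x => V (x 0) := funext huV
    rw [this]
    exact hVmeas.comp hproj
  -- oddness
  have hodd : ∀ x, u (-x) = -u x := by
    intro x
    rw [hu (-x), hu x]
    have h0 : (-x) 0 = -(x 0) := rfl
    rw [h0, abs_neg]
    by_cases h : τ₀ ≤ |x 0|
    · rw [if_pos h, if_pos h, Real.sign_neg]; ring
    · rw [if_neg h, if_neg h]; ring
  have hmapneg : Measure.map Neg.neg γ = γ := gauss_map_neg (n+1)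
  have hintneg : ∀ v : EuclideanSpace ℝ (Fin (n+1)) → ℝ,
      ∫ x, v x ∂γ = ∫ x, v (-x) ∂γ := by
    intro v
    conv_lhs => rw [← hmapneg]
    rw [show (Neg.neg : EuclideanSpace ℝ (Fin (n+1)) → EuclideanSpace ℝ (Fin (n+1)))
      = ⇑(MeasurableEquiv.neg (EuclideanSpace ℝ (Fin (n+1)))) from rfl]
    exact MeasureTheory.integral_map_equiv _ _
  -- Part 1
  have part1 : (∫ x, u x ∂γ) = 0 := by
    have h1 : ∫ x, u x ∂γ = ∫ x, u (-x) ∂γ := hintneg u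
    have h2 : ∫ x, u (-x) ∂γ = -∫ x, u x ∂γ := by
      rw [show (fun x => u (-x)) = fun x => -(u x) from funext hodd]
      exact integral_neg u
    have := h1.trans h2
    linarith
  -- Part 2
  have part2 : rearr u (1/2) = 0 := by
    have hfin : IsFiniteMeasure γ := ⟨by rw [hγdef, gauss_univ]; exact ENNReal.one_lt_top⟩
    set A := {x : EuclideanSpace ℝ (Fin (n+1)) | 0 < u x} with hA
    set B := {x : EuclideanSpace ℝ (Fin (n+1)) | u x < 0} with hB
    set C := {x : EuclideanSpace ℝ (Fin (n+1)) | u x = 0} with hC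
    have hAmeas : MeasurableSet A := measurableSet_lt measurable_const hUmeas
    have hBmeas : MeasurableSet B := measurableSet_lt hUmeas measurable_const
    have hCmeas : MeasurableSet C := hUmeas (measurableSet_singleton 0)
    have hABeq : γ A = γ B := by
      have : A = Neg.neg ⁻¹' B := by
        ext x
        show 0 < u x ↔ u (-x) < 0
        rw [hodd x]
        constructor <;> intro h <;> linarith
      rw [this, ← Measure.map_apply measurable_neg hBmeas, hmapneg]
    have hCpos : 0 < γ C := by
      set O := {x : EuclideanSpace ℝ (Fin (n+1)) | |x 0| < τ₀} with hO
      have hOopen : IsOpen O :=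
        isOpen_lt ((EuclideanSpace.proj (0 : Fin (n+1))).continuous.abs) continuous_const
      have hOvol : 0 < volume O := hOopen.measure_pos volume ⟨0, by
        simp only [hO, Set.mem_setOf_eq]
        show |(0:EuclideanSpace ℝ (Fin (n+1))) 0| < τ₀
        rw [show (0:EuclideanSpace ℝ (Fin (n+1))) 0 = 0 from rfl, abs_zero]
        exact hτ₀0⟩
      have hρmeas : Measurable fun x : EuclideanSpace ℝ (Fin (n+1)) =>
          ENNReal.ofReal ((2*π) ^ (-((n+1:ℕ):ℝ)/2) * Real.exp (-‖x‖^2/2)) := by fun_prop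
      have hγO : γ O ≠ 0 := by
        rw [hγdef]
        intro h0
        rw [show gaussMeasure (n+1) = volume.withDensity (fun x =>
          ENNReal.ofReal ((2*π) ^ (-((n+1:ℕ):ℝ)/2) * Real.exp (-‖x‖^2/2))) from rfl] at h0
        rw [withDensity_apply_eq_zero hρmeas] at h0
        have : {x : EuclideanSpace ℝ (Fin (n+1)) |
            ENNReal.ofReal ((2*π) ^ (-((n+1:ℕ):ℝ)/2) * Real.exp (-‖x‖^2/2)) ≠ 0} = Set.univ := by
          ext x
          simp only [Set.mem_setOf_eq, Set.mem_univ, iff_true, ne_eq, ENNReal.ofReal_eq_zero,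
            not_le]
          positivity
        rw [this, Set.univ_inter] at h0
        exact (ne_of_gt hOvol) h0
      have hOC : O ⊆ C := by
        intro x hx
        simp only [hO, Set.mem_setOf_eq] at hx
        simp only [hC, Set.mem_setOf_eq, hu x, if_neg (not_le.2 hx)]
      calc (0:ℝ≥0∞) < γ O := pos_iff_ne_zero.2 hγO
        _ ≤ γ C := measure_mono hOC
    -- totals
    have hdisjAB : Disjoint A B := by
      rw [Set.disjoint_left]
      intro x hxA hxB
      simp only [hA, Set.mem_setOf_eq] at hxA
      simp only [hB, Set.mem_setOf_eq] at hxB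
      linarith
    have hdisjAC : Disjoint A C := by
      rw [Set.disjoint_left]
      intro x hxA hxC
      simp only [hA, Set.mem_setOf_eq] at hxA
      simp only [hC, Set.mem_setOf_eq] at hxC
      linarith
    have hunion : A ∪ B = Cᶜ := by
      ext x
      simp only [hA, hB, hC, Set.mem_union, Set.mem_setOf_eq, Set.mem_compl_iff]
      constructor
      · rintro (h | h) h0 <;> linarith [h0 ▸ h]
      · intro h
        rcases lt_trichotomy (u x) 0 with h' | h' | h'
        · right; exact h'
        · exact absurd h' h
        · left; exact h'
    have hsum : γ A + γ B + γ C = 1 := by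
      rw [← measure_union hdisjAB hBmeas, hunion]
      rw [measure_compl hCmeas (measure_ne_top γ C)]
      rw [hγdef, gauss_univ]
      exact tsub_add_cancel_of_le (by
        rw [← gauss_univ n, ← hγdef]; exact measure_mono (Set.subset_univ C))
    set a := (γ A).toReal with ha
    set c := (γ C).toReal with hc
    have hane : γ A ≠ ⊤ := measure_ne_top γ A
    have hcne : γ C ≠ ⊤ := measure_ne_top γ C
    have hrsum : 2*a + c = 1 := by
      have := congrArg ENNReal.toReal hsum
      rw [← hABeq] at this
      rw [ENNReal.toReal_add (by finiteness) hcne, ENNReal.toReal_add hane hane] at this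
      rw [ENNReal.toReal_one] at this
      linarith
    have hcpos : 0 < c := ENNReal.toReal_pos (ne_of_gt hCpos) hcne
    have hanneg : 0 ≤ a := ENNReal.toReal_nonneg
    -- membership of 0
    have h0mem : γ {x | (0:ℝ) < u x} ≤ ENNReal.ofReal (1/2) := by
      rw [ENNReal.le_ofReal_iff_toReal_le hane (by norm_num)]
      show a ≤ 1/2
      linarith
    -- lower bound
    have hlb : ∀ t ∈ {t : ℝ | γ {x | t < u x} ≤ ENNReal.ofReal (1/2)}, (0:ℝ) ≤ t := by
      intro t ht
      by_contra hneg
      push_neg at hneg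
      have hsub : A ∪ C ⊆ {x | t < u x} := by
        intro x hx
        rcases hx with hx | hx
        · simp only [hA, Set.mem_setOf_eq] at hx
          simp only [Set.mem_setOf_eq]
          linarith
        · simp only [hC, Set.mem_setOf_eq] at hx
          simp only [Set.mem_setOf_eq]
          linarith [hx ▸ hneg]
      have h1 : γ (A ∪ C) ≤ ENNReal.ofReal (1/2) :=
        le_trans (measure_mono hsub) ht
      rw [measure_union hdisjAC hCmeas] at h1
      rw [ENNReal.le_ofReal_iff_toReal_le (by finiteness) (by norm_num),
        ENNReal.toReal_add hane hcne] at h1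
      linarith
    -- conclude
    show sInf {t : ℝ | gaussMeasure (n+1) {x | t < u x} ≤ ENNReal.ofReal (1/2)} = 0
    rw [← hγdef]
    apply le_antisymm
    · exact csInf_le ⟨0, hlb⟩ h0mem
    · exact le_csInf ⟨0, h0mem⟩ hlb
  -- Part 3
  have part3 : (∫ x, E (g x) ∂γ)
      ≤ 1 + (2 / Real.sqrt (2 * Real.pi))
          * ∫ τ in Set.Ioi τ₀, 1 / (τ * (Real.log τ) ^ 2) := by
    set c1 : ℝ := (2*Real.pi) ^ (-(1:ℝ)/2) with hc1def
    have hc1pos : 0 < c1 := by rw [hc1def]; positivity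
    have hkey : ∀ s : ℝ, τ₀ < s → E (f s) = Real.exp (s^2/2) / (s * Real.log s ^ 2) := by
      intro s hs
      have h1s : 1 < s := lt_trans hτ₀ hs
      have h0s : 0 < s := lt_trans one_pos h1s
      have hL : 0 < Real.log s := Real.log_pos h1s
      have hbase := hpos s hs
      have hfτ := hf s hs
      have hf_nonneg : 0 ≤ f s := by
        rw [hfτ]; positivity
      have hfβ : (f s) ^ β = s^2/2 - Real.log s - 2*Real.log (Real.log s) := by
        rw [hfτ, ← Real.rpow_mul hbase.le, show (1/β)*β = 1 by field_simp, Real.rpow_one]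
      have hexp : Real.exp ((f s)^β) = Real.exp (s^2/2) / (s * Real.log s ^ 2) := by
        rw [hfβ, show s^2/2 - Real.log s - 2*Real.log (Real.log s)
          = s^2/2 + (-(Real.log s + 2*Real.log (Real.log s))) by ring,
          Real.exp_add, Real.exp_neg, Real.exp_add]
        have e1 : Real.exp (Real.log s) = s := Real.exp_log h0s
        have e2 : Real.exp (2*Real.log (Real.log s)) = Real.log s ^ 2 := by
          rw [show (2:ℝ)*Real.log (Real.log s) = Real.log (Real.log s ^ 2) by
            rw [Real.log_pow]; push_cast; ring]
          exact Real.exp_log (by positivity)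
        rw [e1, e2]; ring
      have hft₀ : t₀ ≤ f s := by
        by_contra hlt
        push_neg at hlt
        have h2 : (f s)^β < t₀ ^ β := Real.rpow_lt_rpow hf_nonneg hlt hβ
        have h3 : Real.exp ((f s)^β) < Real.exp (t₀^β) := Real.exp_lt_exp.2 h2
        rw [hexp] at h3
        exact absurd (hτ s hs) (not_le.2 h3)
      rw [hEeq _ hft₀, hexp]
    set H0 : ℝ → ℝ := fun t => if τ₀ ≤ |t| then E (f |t|) else E 0 with hH0def
    have step1 : (∫ x, E (g x) ∂γ) = ∫ x, H0 (x 0) ∂γ := by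
      have : (fun x : EuclideanSpace ℝ (Fin (n+1)) => E (g x)) = fun x => H0 (x 0) := by
        funext x
        rw [hg x]
        exact apply_ite E _ _ _
      rw [this]
    have step2 : (∫ x, H0 (x 0) ∂γ) = ∫ t, H0 t * (c1 * Real.exp (-t^2/2)) := by
      rw [hγdef]; exact gaussAux n H0
    set h1 : ℝ → ℝ := fun t => if |t| < τ₀ then E 0 * (c1 * Real.exp (-t^2/2)) else 0
      with hh1def
    set k : ℝ → ℝ := fun t => c1 * (1/(|t| * Real.log |t| ^ 2)) with hkdef
    set j : ℝ → ℝ := (Set.Ioi τ₀).indicator k with hjdef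
    have hjt : ∀ t : ℝ, j t = if τ₀ < t then k t else 0 := by
      intro t
      rw [hjdef, Set.indicator_apply]
      rfl
    have jint : Integrable j := by
      rw [hjdef, integrable_indicator_iff measurableSet_Ioi]
      refine MeasureTheory.IntegrableOn.congr_fun (part4.const_mul c1)
        (fun t ht => ?_) measurableSet_Ioi

      have ht0 : 0 < t := lt_trans hτ₀0 ht
      rw [hkdef]
      simp only [abs_of_pos ht0]
    have h2int : Integrable (fun t => j t + j (-t)) := jint.add jint.comp_neg
    have hexpmeas : Measurable fun t : ℝ => Real.exp (-t^2/2) :=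
      Real.measurable_exp.comp ((measurable_id.pow_const 2).neg.div_const 2)
    have h1meas : Measurable h1 := by
      rw [hh1def]
      exact Measurable.ite (measurableSet_lt continuous_abs.measurable measurable_const)
        ((measurable_const.mul hexpmeas).const_mul (E 0)) measurable_const
    have h1int : Integrable h1 := by
      apply Integrable.mono'
        ((integrable_exp_neg_mul_sq (by norm_num : (0:ℝ) < 1/2)).const_mul (|E 0| * c1))
        h1meas.aestronglyMeasurable
      refine ae_of_all _ (fun t => ?_)
      have he : Real.exp (-t^2/2) = Real.exp (-(1/2)*t^2) := by congr 1; ring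
      simp only [hh1def]
      by_cases h : |t| < τ₀
      · rw [if_pos h]
        rw [Real.norm_eq_abs, abs_mul, abs_mul]
        rw [abs_of_pos hc1pos, abs_of_pos (Real.exp_pos _), he]
        exact le_of_eq (by ring)
      · rw [if_neg h]
        simp only [norm_zero]
        positivity
    have step3 : (∫ t, H0 t * (c1 * Real.exp (-t^2/2)))
        = ∫ t, (h1 t + (j t + j (-t))) := by
      apply integral_congr_ae
      have hnull : (volume : Measure ℝ) {τ₀, -τ₀} = 0 :=
        ((Set.finite_singleton (-τ₀)).insert τ₀).measure_zero volume
      refine Filter.eventuallyEq_of_mem (compl_mem_ae_iff.mpr hnull) (fun t ht => ?_)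
      have habs : |t| ≠ τ₀ := by
        intro he
        rcases (abs_eq hτ₀0.le).1 he with h | h
        · exact ht (by rw [h]; exact Set.mem_insert _ _)
        · exact ht (by rw [h]; exact Set.mem_insert_of_mem _ rfl)
      rcases lt_or_gt_of_ne habs with hlt | hgt
      · -- |t| < τ₀
        have hc : ¬ τ₀ ≤ |t| := not_le.2 hlt
        have hjt1 : j t = 0 := by
          rw [hjt t, if_neg (by
            intro h'
            exact absurd (lt_of_le_of_lt (le_abs_self t) hlt) (not_lt.2 h'.le))]
        have hjt2 : j (-t) = 0 := by
          rw [hjt (-t), if_neg (by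
            intro h'
            exact absurd (lt_of_le_of_lt (le_abs_self (-t)) (by rwa [abs_neg]))
              (not_lt.2 h'.le))]
        rw [hH0def, hh1def]
        simp only [if_neg hc, if_pos hlt, hjt1, hjt2]
        ring
      · -- τ₀ < |t|
        have hc : τ₀ ≤ |t| := hgt.le
        have hncond : ¬ |t| < τ₀ := not_lt.2 hc
        have h1t : h1 t = 0 := by rw [hh1def]; simp only [if_neg hncond]
        have hL : 0 < Real.log |t| := Real.log_pos (lt_trans hτ₀ hgt)
        have htne : (0:ℝ) < |t| := lt_trans hτ₀0 hgt
        have hcancel : Real.exp (|t|^2/2) * Real.exp (-t^2/2) = 1 := by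
          rw [← Real.exp_add, show |t|^2/2 + -t^2/2 = 0 by rw [sq_abs]; ring, Real.exp_zero]
        have hsum : j t + j (-t) = k t := by
          rcases le_or_gt 0 t with h0 | h0
          · have hteq : |t| = t := abs_of_nonneg h0
            have h1' : τ₀ < t := by rwa [hteq] at hgt
            have h2' : ¬ τ₀ < -t := by
              intro h'
              linarith
            rw [hjt t, hjt (-t), if_pos h1', if_neg h2', add_zero]
          · have hteq : |t| = -t := abs_of_neg h0
            have h1' : ¬ τ₀ < t := by intro h'; linarith
            have h2' : τ₀ < -t := by rwa [hteq] at hgt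
            rw [hjt t, hjt (-t), if_pos h2', if_neg h1', zero_add]
            rw [hkdef]
            simp only [abs_neg]
        rw [hH0def]
        simp only [if_pos hc]
        rw [h1t, hsum, zero_add, hkey |t| hgt, hkdef]
        calc Real.exp (|t|^2/2) / (|t| * Real.log |t| ^ 2) * (c1 * Real.exp (-t^2/2))
            = c1 * (1/(|t| * Real.log |t| ^ 2)) * (Real.exp (|t|^2/2) * Real.exp (-t^2/2)) := by
              ring
          _ = c1 * (1/(|t| * Real.log |t| ^ 2)) := by rw [hcancel, mul_one]
    have step4 : (∫ t, (h1 t + (j t + j (-t))))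
        = (∫ t, h1 t) + ∫ t, (j t + j (-t)) := integral_add h1int h2int
    set I : ℝ := ∫ τ in Set.Ioi τ₀, 1 / (τ * (Real.log τ) ^ 2) with hIdef
    have hj_val : (∫ t, j t) = c1 * I := by
      rw [hjdef, integral_indicator measurableSet_Ioi]
      rw [show (∫ t in Set.Ioi τ₀, k t)
          = ∫ t in Set.Ioi τ₀, c1 * (1/(t * Real.log t ^ 2)) from
        setIntegral_congr_fun measurableSet_Ioi (fun t ht => by
          rw [hkdef]
          simp only [abs_of_pos (lt_trans hτ₀0 ht)])]
      rw [integral_const_mul, hIdef]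
    have step5 : (∫ t, (j t + j (-t))) = 2 * (c1 * I) := by
      rw [integral_add jint jint.comp_neg]
      rw [integral_neg_eq_self j (volume : Measure ℝ)]
      rw [hj_val]; ring
    have step6 : (∫ t, h1 t) ≤ 1 := by
      have hle : ∀ t, h1 t ≤ c1 * Real.exp (-t^2/2) := by
        intro t
        simp only [hh1def]
        by_cases h : |t| < τ₀
        · rw [if_pos h]
          exact mul_le_of_le_one_left (by positivity) hE0
        · rw [if_neg h]
          positivity
      calc (∫ t, h1 t) ≤ ∫ t, c1 * Real.exp (-t^2/2) :=
            integral_mono h1int gauss_one_dim_integrable hle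
        _ = 1 := gauss_one_dim
    have hc1sqrt : c1 = (Real.sqrt (2*π))⁻¹ := by
      rw [hc1def, show (-(1:ℝ)/2) = -(1/2 : ℝ) by norm_num, Real.rpow_neg h2π.le,
        ← Real.sqrt_eq_rpow]
    calc (∫ x, E (g x) ∂γ) = ∫ t, H0 t * (c1 * Real.exp (-t^2/2)) := step1.trans step2
      _ = ∫ t, (h1 t + (j t + j (-t))) := step3
      _ = (∫ t, h1 t) + ∫ t, (j t + j (-t)) := step4
      _ = (∫ t, h1 t) + 2 * (c1 * I) := by rw [step5]
      _ ≤ 1 + 2 * (c1 * I) := add_le_add_left step6 _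
      _ = 1 + (2 / Real.sqrt (2 * Real.pi)) * I := by
          rw [hc1sqrt, div_eq_mul_inv]; ring
  exact ⟨part1, part2, part3, part4⟩
end
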